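/- arXiv:2506.17069 — 9 statements merged into one kernel-verified Lean document; each statement's English description precedes it below -/
import Mathlib

section
/- The number of partial injections of rank exactly α−r on a set of α elements equals (α!)²/((α−r)!·(r!)²). -/
def pinjMap (α k : ℕ) (p : Σ s : {s : Finset (Fin α) // s.card = k}, (↥s.1 ↪ Fin α)) :
    {f : Fin α → Option (Fin α) //
      (∀ i j a, f i = some a → f j = some a → i = j) ∧
      (Finset.univ.filter fun i => (f i).isSome).card = k} :=
  ⟨fun i => if h : i ∈ p.1.1 then some (p.2 ⟨i, h⟩) else none, by
    constructor
    · intro i j a hi hj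
      by_cases h1 : i ∈ p.1.1 <;> by_cases h2 : j ∈ p.1.1 <;>
        simp [h1, h2] at hi hj
      have : p.2 ⟨i, h1⟩ = p.2 ⟨j, h2⟩ := by rw [hi, hj]
      exact congrArg Subtype.val (p.2.injective this)
    · have hset : (Finset.univ.filter fun i =>
          (if h : i ∈ p.1.1 then some (p.2 ⟨i, h⟩) else none).isSome) = p.1.1 := by
        ext i
        by_cases h : i ∈ p.1.1 <;> simp [h]
      rw [hset, p.1.2]⟩

noncomputable def pinjEquiv (α k : ℕ) :
    (Σ s : {s : Finset (Fin α) // s.card = k}, (↥s.1 ↪ Fin α)) ≃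
    {f : Fin α → Option (Fin α) //
      (∀ i j a, f i = some a → f j = some a → i = j) ∧
      (Finset.univ.filter fun i => (f i).isSome).card = k} := by
  apply Equiv.ofBijective (pinjMap α k)
  constructor
  · rintro ⟨⟨s, hs⟩, e⟩ ⟨⟨t, ht⟩, g⟩ h
    have hfun := congrArg Subtype.val h
    simp only [pinjMap] at hfun
    have hst : s = t := by
      ext i
      by_cases h1 : i ∈ s <;> by_cases h2 : i ∈ t
      · simp [h1, h2]
      · have := congrFun hfun i; simp [h1, h2] at this
      · have := congrFun hfun i; simp [h1, h2] at this
      · simp [h1, h2]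
    subst hst
    refine Sigma.ext rfl (heq_of_eq ?_)
    ext ⟨i, hi⟩
    have := congrFun hfun i
    have h' : e ⟨i, hi⟩ = g ⟨i, hi⟩ := by simpa [hi] using this
    exact congrArg _ h'
  · rintro ⟨f, hinj, hcard⟩
    refine ⟨⟨⟨Finset.univ.filter fun i => (f i).isSome, hcard⟩,
      ⟨fun i => (f i.1).get (by
        have := i.2; simp only [Finset.mem_filter] at this; exact this.2), ?_⟩⟩, ?_⟩
    · rintro ⟨i, hi⟩ ⟨j, hj⟩ h
      simp only [Finset.mem_filter, Finset.mem_univ, true_and] at hi hj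
      simp only at h
      have h1 : f i = some ((f i).get hi) := (Option.some_get hi).symm
      have h2 : f j = some ((f i).get hi) := by
        rw [h]; exact (Option.some_get hj).symm
      exact Subtype.ext (hinj i j _ h1 h2)
    · refine Subtype.ext (funext fun i => ?_)
      simp only [pinjMap]
      by_cases h : (f i).isSome
      · have hi : i ∈ Finset.univ.filter fun i => (f i).isSome := by simp [h]
        simp only [dif_pos hi]
        exact Option.some_get h
      · have hi : i ∉ Finset.univ.filter fun i => (f i).isSome := by simp [h]
        simp only [dif_neg hi]
        exact (Option.not_isSome_iff_eq_none.mp h).symm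

/-- The number of partial injections of rank exactly `α − r` on a set of `α`
elements equals `(α!)² / ((α−r)!·(r!)²)`.  A partial injection is modeled as a
function `Fin α → Option (Fin α)` which is injective where defined; its rank is
the cardinality of its domain of definition. -/
theorem card_partial_injections_of_rank (α r : ℕ) (hr : r ≤ α) :
    Nat.card {f : Fin α → Option (Fin α) //
      (∀ i j a, f i = some a → f j = some a → i = j) ∧
      (Finset.univ.filter fun i => (f i).isSome).card = α - r} =
    (Nat.factorial α) ^ 2 / (Nat.factorial (α - r) * (Nat.factorial r) ^ 2) := by
  rw [Nat.card_congr (pinjEquiv α (α - r)).symm]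
  rw [Nat.card_eq_fintype_card, Fintype.card_sigma]
  have hcard : ∀ s : {s : Finset (Fin α) // s.card = α - r},
      Fintype.card (↥s.1 ↪ Fin α) = Nat.descFactorial α (α - r) := by
    intro s
    rw [Fintype.card_embedding_eq, Fintype.card_coe, s.2, Fintype.card_fin]
  rw [Finset.sum_congr rfl fun s _ => hcard s, Finset.sum_const, smul_eq_mul]
  rw [Finset.card_univ, Fintype.card_finset_len, Fintype.card_fin]
  symm
  apply Nat.div_eq_of_eq_mul_left
  · positivity
  · have h1 : Nat.choose α (α - r) * Nat.factorial (α - r) * Nat.factorial r =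
        Nat.factorial α := by
      have := Nat.choose_mul_factorial_mul_factorial (Nat.sub_le α r)
      rwa [Nat.sub_sub_self hr] at this
    have h2 : Nat.factorial r * Nat.descFactorial α (α - r) = Nat.factorial α := by
      have := Nat.factorial_mul_descFactorial (Nat.sub_le α r)
      rwa [Nat.sub_sub_self hr] at this
    calc Nat.factorial α ^ 2
        = (Nat.choose α (α - r) * Nat.factorial (α - r) * Nat.factorial r) *
          (Nat.factorial r * Nat.descFactorial α (α - r)) := by rw [h1, h2]; ring
      _ = Nat.choose α (α - r) * Nat.descFactorial α (α - r) *
          (Nat.factorial (α - r) * Nat.factorial r ^ 2) := by ring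
end

section
/- Let n ≥ α. The map sending a permutation Q ∈ S_{α+n} to the upper-left α×α corner [Q]_α of its permutation matrix induces a bijection between the double coset space S_n \ S_{α+n} / S_n and Π_α. -/
open Equiv

/-!
`Q` and `Q'` lie in the same `(S_n, S_n)` double coset exactly when they agree at every point of
`s = {1,…,α}` that one of them maps into `s`, i.e. when their corners agree. One direction holds
because `S_n` fixes `s` pointwise; for the other, the partial bijection that is the identity on `s`
and sends `Q⁻¹ y` to `Q'⁻¹ y` for `y ∈ s` extends to some `σ ∈ S_n`, and `Q' = (Q' σ Q⁻¹) Q σ⁻¹`.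
Surjectivity onto `Π_α` uses `α ≤ n` to send the rows of `[Q]_α` without a `1` to distinct
columns outside `s`.
-/

/-- The subgroup `S_n ⊆ S_{α+n}` of permutations fixing `{1,…,α}` pointwise. -/
def fixFirst (α n : ℕ) : Subgroup (Perm (Fin (α + n))) :=
  fixingSubgroup (Perm (Fin (α + n))) {i : Fin (α + n) | (i : ℕ) < α}

/-- The upper-left `α×α` corner of (the permutation matrix of) `Q ∈ S_{α+n}`,
viewed as a partial map `Fin α → Option (Fin α)`. -/
def corner (α n : ℕ) (Q : Perm (Fin (α + n))) (i : Fin α) : Option (Fin α) :=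
  if h : ((Q (Fin.castAdd n i)) : ℕ) < α then some ⟨(Q (Fin.castAdd n i) : ℕ), h⟩ else none

namespace Equiv.Perm

variable {X : Type*} {s : Set X}

theorem apply_eq_of_rel_fixingSubgroup {Q Q' : Perm X}
    (hQ : DoubleCoset.setoid (fixingSubgroup (Perm X) s) (fixingSubgroup (Perm X) s) Q Q')
    {x : X} (hx : x ∈ s) (hQx : Q x ∈ s) : Q' x = Q x := by
  obtain ⟨a, ha, b, hb, rfl⟩ := DoubleCoset.rel_iff.1 hQ
  rw [mem_fixingSubgroup_iff] at ha hb
  have hbx : b x = x := hb x hx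
  simpa [Perm.smul_def, hbx] using ha _ hQx

theorem rel_fixingSubgroup_of_forall [Finite X] {Q Q' : Perm X}
    (h : ∀ x ∈ s, Q x ∈ s ∨ Q' x ∈ s → Q x = Q' x) :
    DoubleCoset.setoid (fixingSubgroup (Perm X) s) (fixingSubgroup (Perm X) s) Q Q' := by
  classical
  -- `σ` will be an extension of `c` from `s ∪ Q⁻¹ s`; on `s ∩ Q⁻¹ s` the hypothesis makes `c = id`.
  let c : X → X := fun x => if Q x ∈ s then Q'.symm (Q x) else x
  have hc_inj : Function.Injective fun x : {x // x ∈ s ∨ Q x ∈ s} => c x := by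
    have key : ∀ x y, y ∈ s → Q x ∈ s → Q y ∉ s → Q'.symm (Q x) ≠ y := by
      rintro x y hy hQx hQy rfl
      exact hQy (by simpa [h _ hy (.inr (by simpa using hQx))] using hQx)
    rintro ⟨x, hx⟩ ⟨y, hy⟩ hxy
    simp only [c] at hxy
    split_ifs at hxy with hQx hQy hQy
    · simpa using hxy
    · exact absurd hxy (key x y (hy.resolve_right hQy) hQx hQy)
    · exact absurd hxy.symm (key y x (hx.resolve_right hQx) hQy hQx)
    · exact Subtype.ext hxy
  obtain ⟨σ, hσ⟩ := exists_extending_pair _ _ Subtype.val_injective hc_inj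
  have hσ_mem : σ ∈ fixingSubgroup (Perm X) s := by
    refine (mem_fixingSubgroup_iff _).2 fun x hx => ?_
    rw [Perm.smul_def, hσ ⟨x, .inl hx⟩]
    simp only [c]
    split_ifs with hQx
    · rw [h x hx (.inl hQx), symm_apply_apply]
    · rfl
  refine DoubleCoset.rel_iff.2 ⟨Q' * σ * Q⁻¹, ?_, σ⁻¹, inv_mem hσ_mem, by group⟩
  refine (mem_fixingSubgroup_iff _).2 fun y hy => ?_
  have := hσ ⟨Q.symm y, .inr (by simpa using hy)⟩
  simp only [apply_symm_apply, hy, ↓reduceIte, c] at this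
  simp [Perm.smul_def, this]

theorem rel_fixingSubgroup_iff [Finite X] {Q Q' : Perm X} :
    DoubleCoset.setoid (fixingSubgroup (Perm X) s) (fixingSubgroup (Perm X) s) Q Q' ↔
      ∀ x ∈ s, Q x ∈ s ∨ Q' x ∈ s → Q x = Q' x := by
  refine ⟨fun hQ x hx hQx => ?_, rel_fixingSubgroup_of_forall⟩
  rcases hQx with hQx | hQx
  · exact (apply_eq_of_rel_fixingSubgroup hQ hx hQx).symm
  · exact apply_eq_of_rel_fixingSubgroup (Setoid.symm' _ hQ) hx hQx

end Equiv.Perm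

section Corner

variable {α n : ℕ}

theorem corner_eq_some_iff {Q : Perm (Fin (α + n))} {i a : Fin α} :
    corner α n Q i = some a ↔ Q (Fin.castAdd n i) = Fin.castAdd n a := by
  unfold corner
  split_ifs with h
  · simp [Fin.ext_iff]
  · simp only [false_iff]
    intro hQ
    exact h (hQ ▸ a.isLt)

theorem corner_partialInj (Q : Perm (Fin (α + n))) :
    ∀ i j a, corner α n Q i = some a → corner α n Q j = some a → i = j := by
  intro i j a hi hj
  rw [corner_eq_some_iff] at hi hj
  exact Fin.castAdd_injective _ _ (Q.injective (hi.trans hj.symm))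

theorem corner_eq_corner_iff {Q Q' : Perm (Fin (α + n))} :
    corner α n Q = corner α n Q' ↔
      ∀ x : Fin (α + n), (x : ℕ) < α → (Q x : ℕ) < α ∨ (Q' x : ℕ) < α → Q x = Q' x := by
  constructor
  · intro hc x hx hQx
    have hmem {R R' : Perm (Fin (α + n))} (hRR : corner α n R = corner α n R')
        (hRx : (R x : ℕ) < α) : R' x = R x :=
      corner_eq_some_iff.1 <| hRR ▸ corner_eq_some_iff.2 <|
        show R (Fin.castAdd n ⟨x, hx⟩) = Fin.castAdd n ⟨R x, hRx⟩ from rfl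
    rcases hQx with hQx | hQx
    · exact (hmem hc hQx).symm
    · exact hmem hc.symm hQx
  · intro h
    funext i
    have hi := h (Fin.castAdd n i) i.isLt
    unfold corner
    by_cases hQ : (Q (Fin.castAdd n i) : ℕ) < α
    · simp only [← hi (.inl hQ), hQ, ↓reduceDIte]
    · have hQ' : ¬ (Q' (Fin.castAdd n i) : ℕ) < α := fun hQ' => hQ (hi (.inr hQ') ▸ hQ')
      simp only [hQ, hQ', ↓reduceDIte]

theorem exists_corner_eq (h : α ≤ n) (f : Fin α → Option (Fin α))
    (hf : ∀ i j a, f i = some a → f j = some a → i = j) : ∃ Q, corner α n Q = f := by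
  let e : Fin α → Fin (α + n) := fun i =>
    (f i).elim (Fin.natAdd α (Fin.castLE h i)) (Fin.castAdd n)
  have he : Function.Injective e := by
    intro i j hij
    cases hfi : f i <;> cases hfj : f j <;>
      simp only [e, hfi, hfj, Option.elim_none, Option.elim_some, Fin.ext_iff, Fin.val_natAdd,
        Fin.val_castLE, Fin.val_castAdd, Nat.add_left_cancel_iff] at hij
    · exact Fin.ext hij
    · omega
    · omega
    · exact hf i j _ hfi (hfj.trans (congrArg some (Fin.ext hij)).symm)
  obtain ⟨Q, hQ⟩ := Perm.exists_extending_pair _ _ (Fin.castAdd_injective α n) he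
  refine ⟨Q, funext fun i => ?_⟩
  cases hfi : f i with
  | some a => rw [corner_eq_some_iff, hQ]; simp [e, hfi]
  | none =>
    unfold corner
    simp [hQ, e, hfi]

theorem doubleCoset_rel_fixFirst_iff {Q Q' : Perm (Fin (α + n))} :
    DoubleCoset.setoid (fixFirst α n : Set (Perm (Fin (α + n)))) (fixFirst α n) Q Q' ↔
      corner α n Q = corner α n Q' :=
  Perm.rel_fixingSubgroup_iff.trans corner_eq_corner_iff.symm

end Corner

/-- For `n ≥ α`, the map `Q ↦ [Q]_α` induces a bijection between the double
coset space `S_n \ S_{α+n} / S_n` and `Π_α`, the set of partial injections of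
`{1,…,α}`. -/
theorem doset_corner_bijective (α n : ℕ) (h : α ≤ n) :
    ∃ F : DoubleCoset.Quotient (fixFirst α n : Set (Perm (Fin (α + n))))
            (fixFirst α n : Set (Perm (Fin (α + n)))) →
          {f : Fin α → Option (Fin α) // ∀ i j a, f i = some a → f j = some a → i = j},
      (∀ Q : Perm (Fin (α + n)), (F (Quotient.mk'' Q)).1 = corner α n Q) ∧
      Function.Bijective F := by
  refine ⟨Quotient.lift (fun Q => ⟨corner α n Q, corner_partialInj Q⟩)
    fun Q Q' hQQ' => Subtype.ext (doubleCoset_rel_fixFirst_iff.1 hQQ'), fun Q => rfl, ?_, ?_⟩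
  · rintro ⟨Q⟩ ⟨Q'⟩ hQQ'
    exact Quotient.sound (doubleCoset_rel_fixFirst_iff.2 (congrArg Subtype.val hQQ'))
  · rintro ⟨f, hf⟩
    obtain ⟨Q, rfl⟩ := exists_corner_eq h f hf
    exact ⟨Quotient.mk'' Q, rfl⟩
end

section
/- If n < α, then the image of the map Q ↦ [Q]_α from S_{α+n} to Π_α consists exactly of the partial injections of rank at least α − n. -/
open Equiv

/-- The rank of a partial injection: the number of points where it is defined
(equivalently, the number of 1s in the corresponding 0-1 matrix). -/
def pRank {α : ℕ} (f : Fin α → Option (Fin α)) : ℕ :=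
  (Finset.univ.filter fun i => (f i).isSome).card

lemma rank_corner_ge (α n : ℕ) (Q : Perm (Fin (α + n))) :
    α - n ≤ pRank (corner α n Q) := by
  classical
  set c : Fin α → Prop := fun i => ((Q (Fin.castAdd n i)) : ℕ) < α with hc
  have hpr : pRank (corner α n Q) = (Finset.univ.filter fun i => c i).card := by
    unfold pRank
    congr 1
    apply Finset.filter_congr
    intro i _
    simp only [corner, hc]
    split_ifs with h' <;> simp [h']
  have hsum : (Finset.univ.filter fun i => c i).card
      + (Finset.univ.filter fun i => ¬ c i).card = α := by
    rw [Finset.card_filter_add_card_filter_not]; simp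
  have hB : (Finset.univ.filter fun i => ¬ c i).card ≤ n := by
    have hmaps : ∀ i ∈ (Finset.univ.filter fun i => ¬ c i),
        Q (Fin.castAdd n i) ∈ (Finset.univ.filter fun x : Fin (α+n) => α ≤ (x:ℕ)) := by
      intro i hi
      simp only [Finset.mem_filter, Finset.mem_univ, true_and, hc] at hi ⊢
      omega
    have hinj : Set.InjOn (fun i => Q (Fin.castAdd n i))
        (Finset.univ.filter fun i => ¬ c i) := by
      intro a _ b _ hab
      have := Q.injective hab
      exact Fin.ext (by simpa using congrArg Fin.val this)
    have hcard := Finset.card_le_card_of_injOn _ hmaps hinj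
    have htop : (Finset.univ.filter fun x : Fin (α+n) => α ≤ (x:ℕ))
        = Finset.image (Fin.natAdd α) Finset.univ := by
      ext x
      simp only [Finset.mem_filter, Finset.mem_univ, true_and, Finset.mem_image]
      constructor
      · intro hx
        exact ⟨⟨(x:ℕ) - α, by have := x.isLt; omega⟩, Fin.ext (by simp; omega)⟩
      · rintro ⟨j, rfl⟩
        simp
    have hninj : Function.Injective ((Fin.natAdd α) : Fin n → Fin (α+n)) := by
      intro a b hab
      exact Fin.ext (by have := congrArg Fin.val hab; simpa using this)
    rw [htop, Finset.card_image_of_injective _ hninj] at hcard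
    simpa using hcard
  omega

lemma exists_perm_corner (α n : ℕ) (f : Fin α → Option (Fin α))
    (hf : ∀ i j a, f i = some a → f j = some a → i = j)
    (hk : α - n ≤ pRank f) :
    ∃ Q : Perm (Fin (α + n)), corner α n Q = f := by
  classical
  set s : Finset (Fin α) := Finset.univ.filter (fun i => (f i).isSome) with hs
  have hks : pRank f = s.card := rfl
  set u : ℕ := α - s.card with hudef
  have hk' : α - n ≤ s.card := hks ▸ hk
  have hu : u ≤ n := by omega
  have hU : sᶜ.card = u := by rw [Finset.card_compl]; simp [hudef]
  have hinj' : Set.InjOn (fun i => (f i).getD i) s := by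
    intro i hi j hj hij
    simp only [hs, Finset.coe_filter, Set.mem_setOf_eq] at hi hj
    obtain ⟨a, ha⟩ := Option.isSome_iff_exists.mp hi.2
    obtain ⟨b, hb⟩ := Option.isSome_iff_exists.mp hj.2
    simp only [ha, hb, Option.getD_some] at hij
    subst hij
    exact hf i j a ha hb
  set Timg : Finset (Fin α) := s.image (fun i => (f i).getD i) with hTimg_def
  have hTimg : Timg.card = s.card := Finset.card_image_of_injOn hinj'
  have hT : Timgᶜ.card = u := by rw [Finset.card_compl, hTimg]; simp [hudef]
  set eU := sᶜ.orderIsoOfFin hU with heU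
  set eT := Timgᶜ.orderIsoOfFin hT with heT
  have memU : ∀ (i : Fin α), ¬ (f i).isSome → i ∈ sᶜ := by
    intro i hi
    simp only [hs, Finset.mem_compl, Finset.mem_filter, Finset.mem_univ, true_and]
    exact hi
  set g : Fin (α + n) → Fin (α + n) := Fin.addCases
    (fun i => if hfi : (f i).isSome then Fin.castAdd n ((f i).get hfi)
      else Fin.natAdd α (Fin.castLE hu (eU.symm ⟨i, memU i hfi⟩)))
    (fun j => if hj : (j : ℕ) < u then Fin.castAdd n ((eT ⟨j, hj⟩ : Fin α))
      else Fin.natAdd α j) with hg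
  -- membership facts
  have hget_mem : ∀ (i : Fin α) (hfi : (f i).isSome), (f i).get hfi ∈ Timg := by
    intro i hfi
    obtain ⟨a, ha⟩ := Option.isSome_iff_exists.mp hfi
    simp only [hTimg_def, Finset.mem_image]
    exact ⟨i, by simp [hs, hfi], by simp [ha]⟩
  -- injectivity
  have hginj : Function.Injective g := by
    have hrep : ∀ x : Fin (α + n), (∃ i : Fin α, x = Fin.castAdd n i) ∨
        (∃ j : Fin n, x = Fin.natAdd α j) := by
      intro x
      rcases lt_or_ge (x : ℕ) α with hx | hx
      · exact Or.inl ⟨⟨x, hx⟩, Fin.ext (by simp)⟩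
      · exact Or.inr ⟨⟨(x : ℕ) - α, by omega⟩, Fin.ext (by simp; omega)⟩
    intro x y hxy
    rcases hrep x with ⟨i, rfl⟩ | ⟨i, rfl⟩ <;> rcases hrep y with ⟨j, rfl⟩ | ⟨j, rfl⟩ <;>
      simp only [hg, Fin.addCases_left, Fin.addCases_right] at hxy
    · -- left left
      split_ifs at hxy with h1 h2 h2
      · -- both defined
        have : (f i).get h1 = (f j).get h2 := by
          apply Fin.ext
          have := congrArg Fin.val hxy
          simpa using this
        obtain ⟨a, ha⟩ := Option.isSome_iff_exists.mp h1
        obtain ⟨b, hb⟩ := Option.isSome_iff_exists.mp h2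
        have : a = b := by simpa [ha, hb] using this
        subst this
        rw [hf i j a ha hb]
      · exfalso
        have := congrArg Fin.val hxy
        simp only [Fin.coe_castAdd, Fin.coe_natAdd] at this
        have h3 := ((f i).get h1).isLt
        omega
      · exfalso
        have := congrArg Fin.val hxy
        simp only [Fin.coe_castAdd, Fin.coe_natAdd] at this
        have h3 := ((f j).get h2).isLt
        omega
      · -- both undefined
        have hv : (Fin.castLE hu (eU.symm ⟨i, memU i h1⟩) : ℕ)
            = (Fin.castLE hu (eU.symm ⟨j, memU j h2⟩) : ℕ) := by
          have := congrArg Fin.val hxy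
          simp only [Fin.coe_natAdd] at this
          omega
        have : eU.symm ⟨i, memU i h1⟩ = eU.symm ⟨j, memU j h2⟩ :=
          Fin.ext (by simpa using hv)
        have := congrArg eU this
        simp only [OrderIso.apply_symm_apply] at this
        have := congrArg Subtype.val this
        exact congrArg (Fin.castAdd n) this
    · -- left right
      exfalso
      split_ifs at hxy with h1 h2 h2 <;>
        have hv := congrArg Fin.val hxy <;>
        simp only [Fin.coe_castAdd, Fin.coe_natAdd] at hv
      · -- castAdd = castAdd : get i ∈ Timg vs eT ∈ Timgᶜ
        have hmem := hget_mem i h1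
        have hmem2 : ((eT ⟨j, h2⟩ : Fin α)) ∈ Timgᶜ := (eT ⟨j, h2⟩).2
        have : (f i).get h1 = (eT ⟨j, h2⟩ : Fin α) := Fin.ext hv
        rw [this] at hmem
        rw [Finset.mem_compl] at hmem2
        exact hmem2 hmem
      · have := ((f i).get h1).isLt; omega
      · have := (Fin.castLE hu (eU.symm ⟨i, memU i h1⟩)).isLt
        have h3 := ((eT ⟨j, h2⟩ : Fin α)).isLt
        omega
      · -- natAdd castLE vs natAdd j with j ≥ u
        have h3 := (eU.symm ⟨i, memU i h1⟩).isLt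
        simp only [Fin.coe_castLE] at hv
        omega
    · -- right left : symmetric
      exfalso
      split_ifs at hxy with h1 h2 h2 <;>
        have hv := congrArg Fin.val hxy <;>
        simp only [Fin.coe_castAdd, Fin.coe_natAdd] at hv
      · have hmem := hget_mem j h2
        have hmem2 : ((eT ⟨i, h1⟩ : Fin α)) ∈ Timgᶜ := (eT ⟨i, h1⟩).2
        have : (f j).get h2 = (eT ⟨i, h1⟩ : Fin α) := Fin.ext hv.symm
        rw [this] at hmem
        rw [Finset.mem_compl] at hmem2
        exact hmem2 hmem
      · have := (Fin.castLE hu (eU.symm ⟨j, memU j h2⟩)).isLt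
        have h3 := ((eT ⟨i, h1⟩ : Fin α)).isLt
        omega
      · have := ((f j).get h2).isLt; omega
      · have h3 := (eU.symm ⟨j, memU j h2⟩).isLt
        simp only [Fin.coe_castLE] at hv
        omega
    · -- right right
      split_ifs at hxy with h1 h2 h2
      · have : (eT ⟨i, h1⟩ : Fin α) = (eT ⟨j, h2⟩ : Fin α) := by
          apply Fin.ext; have := congrArg Fin.val hxy; simpa using this
        have : eT ⟨i, h1⟩ = eT ⟨j, h2⟩ := Subtype.ext this
        have := eT.injective this
        have := congrArg Fin.val this
        exact Fin.ext (by simpa using this)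
      · exfalso
        have hv := congrArg Fin.val hxy
        simp only [Fin.coe_castAdd, Fin.coe_natAdd] at hv
        have := ((eT ⟨i, h1⟩ : Fin α)).isLt
        omega
      · exfalso
        have hv := congrArg Fin.val hxy
        simp only [Fin.coe_castAdd, Fin.coe_natAdd] at hv
        have := ((eT ⟨j, h2⟩ : Fin α)).isLt
        omega
      · apply Fin.ext
        have hv := congrArg Fin.val hxy
        simp only [Fin.coe_natAdd] at hv
        omega
  refine ⟨Equiv.ofBijective g (Finite.injective_iff_bijective.mp hginj), ?_⟩
  funext i
  have hQ : ∀ x, (Equiv.ofBijective g (Finite.injective_iff_bijective.mp hginj)) x = g x :=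
    fun x => rfl
  unfold corner
  rw [hQ]
  have hca : g (Fin.castAdd n i) = if hfi : (f i).isSome then Fin.castAdd n ((f i).get hfi)
      else Fin.natAdd α (Fin.castLE hu (eU.symm ⟨i, memU i hfi⟩)) := by
    simp [hg]
  rw [hca]
  by_cases hfi : (f i).isSome
  · rw [dif_pos hfi]
    obtain ⟨a, ha⟩ := Option.isSome_iff_exists.mp hfi
    have hlt : ((Fin.castAdd n ((f i).get hfi)) : ℕ) < α := by
      simp
    rw [dif_pos hlt]
    have hga : (f i).get hfi = a := by simp [ha]
    conv_rhs => rw [ha]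
    have he : (⟨((Fin.castAdd n ((f i).get hfi)) : ℕ), hlt⟩ : Fin α) = a := Fin.ext (by simp [hga])
    rw [he]
  · rw [dif_neg hfi]
    have hge : ¬ ((Fin.natAdd α (Fin.castLE hu (eU.symm ⟨i, memU i hfi⟩)) : Fin (α+n)) : ℕ) < α := by
      simp
    rw [dif_neg hge]
    exact (Option.not_isSome_iff_eq_none.mp hfi).symm

/-- If `n < α`, the image of `Q ↦ [Q]_α` on `S_{α+n}` consists exactly of the
partial injections of rank at least `α − n`. -/
theorem corner_image_of_lt (α n : ℕ) (h : n < α)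
    (f : Fin α → Option (Fin α))
    (hf : ∀ i j a, f i = some a → f j = some a → i = j) :
    (∃ Q : Perm (Fin (α + n)), corner α n Q = f) ↔ α - n ≤ pRank f := by
  constructor
  · rintro ⟨Q, rfl⟩
    exact rank_corner_ge α n Q
  · exact exists_perm_corner α n f hf
end

section
/- For σ ∈ Π_α of rank α − r with r ≤ n, the number of permutations Q ∈ S_{α+n} with [Q]_α = σ equals (n!/(n−r)!)·(n!/(n−r)!)·(n−r)! = n!·n!/(n−r)!; that is, the double coset corresponding to σ has exactly n!·n!/(n−r)! elements. -/
open Equiv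

section Aux

variable {α n : ℕ} (σ : Fin α → Option (Fin α))

/-- The total extension of the partial map `σ`, sending the `none`-indices into the
top block according to `e`. -/
def cornerExt (e : {i : Fin α // σ i = none} → Fin n) (i : Fin α) : Fin (α + n) :=
  if h : (σ i).isSome then Fin.castAdd n ((σ i).get h)
  else Fin.natAdd α (e ⟨i, Option.not_isSome_iff_eq_none.mp h⟩)

theorem cornerExt_some {e : {i : Fin α // σ i = none} → Fin n} {i : Fin α} {a : Fin α}
    (h : σ i = some a) : cornerExt σ e i = Fin.castAdd n a := by
  have hs : (σ i).isSome := by simp [h]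
  simp [cornerExt, hs, h]

theorem cornerExt_none {e : {i : Fin α // σ i = none} → Fin n} {i : Fin α}
    (h : σ i = none) : cornerExt σ e i = Fin.natAdd α (e ⟨i, h⟩) := by
  have hs : ¬ (σ i).isSome := by simp [h]
  simp [cornerExt, hs]

theorem cornerExt_injective
    (hσ : ∀ i j a, σ i = some a → σ j = some a → i = j)
    {e : {i : Fin α // σ i = none} → Fin n} (he : Function.Injective e) :
    Function.Injective (cornerExt σ e) := by
  intro i j h
  rcases hi : σ i with _ | a <;> rcases hj : σ j with _ | b
  · rw [cornerExt_none σ hi, cornerExt_none σ hj] at h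
    have : e ⟨i, hi⟩ = e ⟨j, hj⟩ := by
      have := congrArg Fin.val h
      simp only [Fin.coe_natAdd] at this
      exact Fin.ext (by omega)
    exact congrArg Subtype.val (he this)
  · rw [cornerExt_none σ hi, cornerExt_some σ hj] at h
    have := congrArg Fin.val h
    simp only [Fin.coe_natAdd, Fin.coe_castAdd] at this
    have hb := b.isLt
    omega
  · rw [cornerExt_some σ hi, cornerExt_none σ hj] at h
    have := congrArg Fin.val h
    simp only [Fin.coe_natAdd, Fin.coe_castAdd] at this
    have ha := a.isLt
    omega
  · rw [cornerExt_some σ hi, cornerExt_some σ hj] at h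
    have : a = b := Fin.ext (by simpa using congrArg Fin.val h)
    exact hσ i j b (this ▸ hi) hj

theorem corner_eq_of_ext {Q : Perm (Fin (α + n))} (e : {i : Fin α // σ i = none} → Fin n)
    (hQ : ∀ i, Q (Fin.castAdd n i) = cornerExt σ e i) : corner α n Q = σ := by
  funext i
  rcases hi : σ i with _ | a
  · have h1 : Q (Fin.castAdd n i) = Fin.natAdd α (e ⟨i, hi⟩) := by
      rw [hQ i, cornerExt_none σ hi]
    have h2 : ¬ ((Q (Fin.castAdd n i)) : ℕ) < α := by
      rw [h1]; simp [Fin.coe_natAdd]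
    simp [corner, h2]
  · have h1 : Q (Fin.castAdd n i) = Fin.castAdd n a := by
      rw [hQ i, cornerExt_some σ hi]
    have h2 : ((Q (Fin.castAdd n i)) : ℕ) < α := by rw [h1]; simpa using a.isLt
    simp only [corner, h2, dif_pos]
    congr 1
    exact Fin.ext (by simp [h1])

theorem corner_none_le {Q : Perm (Fin (α + n))} (hQ : corner α n Q = σ) {i : Fin α}
    (h : σ i = none) : α ≤ ((Q (Fin.castAdd n i)) : ℕ) := by
  have := congrFun hQ i
  by_contra hc
  push_neg at hc
  simp [corner, hc, h] at this

theorem corner_some_eq {Q : Perm (Fin (α + n))} (hQ : corner α n Q = σ) {i a : Fin α}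
    (h : σ i = some a) : Q (Fin.castAdd n i) = Fin.castAdd n a := by
  have hh := congrFun hQ i
  rw [h] at hh
  by_cases hc : ((Q (Fin.castAdd n i)) : ℕ) < α
  · simp only [corner, hc, dif_pos, Option.some.injEq] at hh
    exact Fin.ext (by simpa using congrArg Fin.val hh)
  · simp [corner, hc] at hh

/-- Extract where `Q` sends the `none`-indices, inside the top block. -/
def eOf {Q : Perm (Fin (α + n))} (hQ : corner α n Q = σ)
    (i : {i : Fin α // σ i = none}) : Fin n :=
  ⟨((Q (Fin.castAdd n i.1)) : ℕ) - α, by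
    have h1 := corner_none_le σ hQ i.2
    have h2 := (Q (Fin.castAdd n i.1)).isLt
    omega⟩

theorem eOf_injective {Q : Perm (Fin (α + n))} (hQ : corner α n Q = σ) :
    Function.Injective (eOf σ hQ) := by
  intro i j h
  have h1 := corner_none_le σ hQ i.2
  have h2 := corner_none_le σ hQ j.2
  have h3 : ((Q (Fin.castAdd n i.1)) : ℕ) - α = ((Q (Fin.castAdd n j.1)) : ℕ) - α :=
    congrArg Fin.val h
  have h4 : Q (Fin.castAdd n i.1) = Q (Fin.castAdd n j.1) := Fin.ext (by omega)
  have h5 : (Fin.castAdd n i.1 : Fin (α + n)) = Fin.castAdd n j.1 := Q.injective h4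
  exact Subtype.ext (Fin.ext (by simpa using congrArg Fin.val h5))

theorem ext_eOf {Q : Perm (Fin (α + n))} (hQ : corner α n Q = σ) (i : Fin α) :
    Q (Fin.castAdd n i) = cornerExt σ (eOf σ hQ) i := by
  rcases hi : σ i with _ | a
  · rw [cornerExt_none σ hi]
    have h1 := corner_none_le σ hQ hi
    exact Fin.ext (by simp [eOf, Fin.coe_natAdd]; omega)
  · rw [cornerExt_some σ hi]
    exact corner_some_eq σ hQ hi

theorem eOf_ext {Q : Perm (Fin (α + n))} (e : {i : Fin α // σ i = none} → Fin n)
    (hQ : ∀ i, Q (Fin.castAdd n i) = cornerExt σ e i)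
    (hc : corner α n Q = σ) : eOf σ hc = e := by
  funext i
  have h1 : Q (Fin.castAdd n i.1) = Fin.natAdd α (e i) := by
    rw [hQ i.1, cornerExt_none σ i.2]
  apply Fin.ext
  simp only [eOf, h1, Fin.coe_natAdd]
  omega

end Aux

/-- For `σ ∈ Π_α` of rank `α − r` with `r ≤ n`, the number of permutations
`Q ∈ S_{α+n}` with `[Q]_α = σ` (i.e. the number of elements of the corresponding
double coset) equals `(n!/(n−r)!)·(n!/(n−r)!)·(n−r)! = n!·n!/(n−r)!`. -/
theorem card_doset_of_corner (α n r : ℕ) (hrα : r ≤ α) (hrn : r ≤ n)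
    (σ : Fin α → Option (Fin α))
    (hσ : ∀ i j a, σ i = some a → σ j = some a → i = j)
    (hrank : pRank σ = α - r) :
    Nat.card {Q : Perm (Fin (α + n)) // corner α n Q = σ} =
      Nat.factorial n * Nat.factorial n / Nat.factorial (n - r) := by
  classical
  -- the set of `none`-indices has cardinality `r`
  have hcardN : Fintype.card {i : Fin α // σ i = none} = r := by
    rw [Fintype.card_subtype]
    have hsplit := Finset.card_filter_add_card_filter_not
      (s := (Finset.univ : Finset (Fin α))) (p := fun i => (σ i).isSome)
    have hfe : (Finset.univ.filter fun i => σ i = none) =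
        (Finset.univ.filter fun i => ¬ (σ i).isSome) := by
      apply Finset.filter_congr
      intro i _
      simp [Option.not_isSome_iff_eq_none]
    rw [hfe]
    have := hrank
    simp only [pRank] at this
    simp only [Finset.card_univ, Fintype.card_fin] at hsplit
    omega
  -- the main equivalence with a sigma type
  let Fib : ({i : Fin α // σ i = none} ↪ Fin n) → Type :=
    fun e => {Q : Perm (Fin (α + n)) // ∀ i, Q (Fin.castAdd n i) = cornerExt σ e i}
  have key : {Q : Perm (Fin (α + n)) // corner α n Q = σ} ≃
      Σ e : {i : Fin α // σ i = none} ↪ Fin n, Fib e :=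
    { toFun := fun Q => ⟨⟨eOf σ Q.2, eOf_injective σ Q.2⟩, Q.1, ext_eOf σ Q.2⟩
      invFun := fun p => ⟨p.2.1, corner_eq_of_ext σ p.1 p.2.2⟩
      left_inv := fun Q => rfl
      right_inv := by
        rintro ⟨e, Q, hQ⟩
        have hc : corner α n Q = σ := corner_eq_of_ext σ e hQ
        have h1 : (⟨eOf σ hc, eOf_injective σ hc⟩ : {i : Fin α // σ i = none} ↪ Fin n) = e := by
          apply Function.Embedding.ext
          intro i
          exact congrFun (eOf_ext σ e hQ hc) i
        exact Sigma.ext h1 (by cases h1; rfl) }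
  -- cardinality of each fiber is `n!`
  have hfib : ∀ e : {i : Fin α // σ i = none} ↪ Fin n,
      Nat.card (Fib e) = Nat.factorial n := by
    intro e
    have hcast : Function.Injective (Fin.castAdd n : Fin α → Fin (α + n)) := by
      intro i j h
      exact Fin.ext (by simpa using congrArg Fin.val h)
    have hext : Function.Injective (cornerExt σ e) := cornerExt_injective σ hσ e.injective
    set s : Set (Fin (α + n)) := Set.range (Fin.castAdd n : Fin α → Fin (α + n)) with hs
    set t : Set (Fin (α + n)) := Set.range (cornerExt σ e) with ht
    let e₀ : s ≃ t := (Equiv.ofInjective _ hcast).symm.trans (Equiv.ofInjective _ hext)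
    have he₀ : ∀ (i : Fin α) (h : Fin.castAdd n i ∈ s),
        e₀ ⟨Fin.castAdd n i, h⟩ = cornerExt σ e i := by
      intro i h
      have h2 : ((Equiv.ofInjective _ hcast).symm ⟨Fin.castAdd n i, h⟩) = i := by
        apply hcast
        exact Equiv.apply_ofInjective_symm hcast ⟨Fin.castAdd n i, h⟩
      simp only [e₀, Equiv.trans_apply, h2]
      rfl
    have E1 : Fib e ≃ { E : Fin (α + n) ≃ Fin (α + n) // ∀ x : s, E x = e₀ x } := by
      apply Equiv.subtypeEquivRight
      intro Q
      constructor
      · rintro h ⟨x, i, rfl⟩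
        rw [h i]
        exact (he₀ i _).symm
      · intro h i
        have := h ⟨Fin.castAdd n i, Set.mem_range_self i⟩
        rw [he₀ i] at this
        exact this
    have E2 : { E : Fin (α + n) ≃ Fin (α + n) // ∀ x : s, E x = e₀ x } ≃
        ((sᶜ : Set (Fin (α + n))) ≃ (tᶜ : Set (Fin (α + n)))) := Equiv.Set.compl e₀
    have hcards : Fintype.card (sᶜ : Set (Fin (α + n))) = n := by
      rw [Fintype.card_compl_set]
      rw [Set.card_range_of_injective hcast]
      simp
    have hcardt : Fintype.card (tᶜ : Set (Fin (α + n))) = n := by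
      rw [Fintype.card_compl_set]
      rw [Set.card_range_of_injective hext]
      simp
    have E3 : (sᶜ : Set (Fin (α + n))) ≃ (tᶜ : Set (Fin (α + n))) :=
      Fintype.equivOfCardEq (hcards.trans hcardt.symm)
    calc Nat.card (Fib e) = Nat.card ((sᶜ : Set (Fin (α + n))) ≃ (tᶜ : Set (Fin (α + n)))) :=
          Nat.card_congr (E1.trans E2)
      _ = Fintype.card ((sᶜ : Set (Fin (α + n))) ≃ (tᶜ : Set (Fin (α + n)))) :=
          Nat.card_eq_fintype_card
      _ = (Fintype.card (sᶜ : Set (Fin (α + n)))).factorial := Fintype.card_equiv E3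
      _ = Nat.factorial n := by rw [hcards]
  -- put everything together
  rw [Nat.card_congr key, Nat.card_eq_fintype_card, Fintype.card_sigma]
  have : ∀ e : {i : Fin α // σ i = none} ↪ Fin n,
      Fintype.card (Fib e) = Nat.factorial n := by
    intro e
    rw [← Nat.card_eq_fintype_card]
    exact hfib e
  rw [Finset.sum_congr rfl fun e _ => this e, Finset.sum_const, smul_eq_mul,
    Finset.card_univ, Fintype.card_embedding_eq, hcardN, Fintype.card_fin,
    Nat.descFactorial_eq_div hrn]
  have hd : Nat.factorial (n - r) ∣ Nat.factorial n :=
    Nat.factorial_dvd_factorial (Nat.sub_le n r)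
  rw [Nat.mul_div_assoc _ hd]
  exact mul_comm _ _
end

section
/- In C[S_n\S_{α+n}/S_n], the element θ_i (1/n! times the sum of delta functions over the double coset S_n·(i, α+1)·S_n, where (i, α+1) is a transposition with i ≤ α) satisfies θ_i² = (n−1)·θ_i + n·1. -/
open Equiv

noncomputable section

/-- The double coset `S_n · t · S_n` in `S_{α+n}`, as a finset. -/
def dcos (α n : ℕ) (t : Perm (Fin (α + n))) : Finset (Perm (Fin (α + n))) :=
  (Set.toFinite {h | ∃ k₁ ∈ fixFirst α n, ∃ k₂ ∈ fixFirst α n, h = k₁ * t * k₂}).toFinset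

/-- `(1/n!)·Σ_{h ∈ S_n t S_n} δ_h` in the group algebra `C[S_{α+n}]`. -/
def dosetElt (α n : ℕ) (t : Perm (Fin (α + n))) : MonoidAlgebra ℂ (Perm (Fin (α + n))) :=
  ((Nat.factorial n : ℂ))⁻¹ • ∑ h ∈ dcos α n t, MonoidAlgebra.single h 1

/-- `θ_i = (1/n!)·Σ_{h ∈ S_n (i,α+1) S_n} δ_h`, where `(i, α+1)` is the
transposition of `i ≤ α` with `α+1` (0-based: of `i < α` with `α`). -/
def theta (α n : ℕ) (hn : 0 < n) (i : Fin α) : MonoidAlgebra ℂ (Perm (Fin (α + n))) :=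
  dosetElt α n (Equiv.swap (Fin.castAdd n i) ⟨α, by omega⟩)

/-- `a(g) = (1/n!)·Σ_{σ ∈ S_n} δ_{gσ}` for `g ∈ S_α ⊆ S_{α+n}`. -/
def aElt (α n : ℕ) (g : Perm (Fin α)) : MonoidAlgebra ℂ (Perm (Fin (α + n))) :=
  ((Nat.factorial n : ℂ))⁻¹ • ∑ σ ∈ (Set.toFinite (fixFirst α n : Set (Perm (Fin (α + n))))).toFinset,
    MonoidAlgebra.single (Perm.viaFintypeEmbedding g (Fin.castAddEmb n) * σ) 1

/-- The unit `(1/n!)·Σ_{k ∈ S_n} δ_k` of the double coset algebra. -/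
def unitK (α n : ℕ) : MonoidAlgebra ℂ (Perm (Fin (α + n))) :=
  ((Nat.factorial n : ℂ))⁻¹ • ∑ σ ∈ (Set.toFinite (fixFirst α n : Set (Perm (Fin (α + n))))).toFinset,
    MonoidAlgebra.single σ 1

end

/-! Let `K ≅ S_n` fix `s = {0, …, α - 1}` pointwise, `E = Σ_{k ∈ K} δ_k` and
`T = Σ_{b ∉ s} δ_{(i b)}`.
The double coset `K (i a) K` is the disjoint union of the cosets `(i b) K`, so its sum is `T E`;
conjugation by `K` permutes the transpositions `(i b)`, so `E T = T E`; and `E E = n! E`.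
Hence `(T E)² = n! T² E`, and since `(i b)(i c) = (i c)(b c)` with `(b c) ∈ K` for `b ≠ c`,
`T² E = n E + (n - 1) T E`. -/

open MonoidAlgebra

section Perm
variable {X : Type*} {s : Set X}

theorem mem_fixingSubgroup_perm_iff {k : Perm X} :
    k ∈ fixingSubgroup (Perm X) s ↔ ∀ x ∈ s, k x = x := by
  simp [mem_fixingSubgroup_iff, Perm.smul_def]

theorem apply_mem_iff_of_mem_fixingSubgroup {k : Perm X} (hk : k ∈ fixingSubgroup (Perm X) s)
    {x : X} : k x ∈ s ↔ x ∈ s :=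
  ⟨fun hkx => k.injective (mem_fixingSubgroup_perm_iff.mp hk _ hkx) ▸ hkx,
    fun hx => (mem_fixingSubgroup_perm_iff.mp hk x hx).symm ▸ hx⟩

theorem Nat.card_fixingSubgroup_perm [Finite X] (s : Set X) :
    Nat.card (fixingSubgroup (Perm X) s) = (Nat.card ↥sᶜ).factorial := by
  classical
  rw [← Nat.card_perm]
  refine Nat.card_congr ((Equiv.subtypeEquivRight fun k => ?_).trans
    (Perm.subtypeEquivSubtypePerm (· ∈ sᶜ)).symm)
  simp [mem_fixingSubgroup_perm_iff]

variable [DecidableEq X] {i a b c : X}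

theorem swap_mem_fixingSubgroup (hb : b ∉ s) (hc : c ∉ s) :
    swap b c ∈ fixingSubgroup (Perm X) s :=
  mem_fixingSubgroup_perm_iff.mpr fun _ hx =>
    swap_apply_of_ne_of_ne (ne_of_mem_of_not_mem hx hb) (ne_of_mem_of_not_mem hx hc)

theorem swap_mul_swap_eq_swap_mul_swap (hib : i ≠ b) (hic : i ≠ c) (hbc : b ≠ c) :
    swap i b * swap i c = swap i c * swap b c := by
  ext x
  simp only [Perm.mul_apply, swap_apply_def]
  split_ifs <;> simp_all

theorem mem_doubleCoset_swap_iff (hi : i ∈ s) (ha : a ∉ s) {h : Perm X} :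
    (∃ k₁ ∈ fixingSubgroup (Perm X) s, ∃ k₂ ∈ fixingSubgroup (Perm X) s,
        h = k₁ * swap i a * k₂) ↔
      ∃ b ∉ s, ∃ k ∈ fixingSubgroup (Perm X) s, h = swap i b * k := by
  constructor
  · rintro ⟨k₁, hk₁, k₂, hk₂, rfl⟩
    refine ⟨k₁ a, (apply_mem_iff_of_mem_fixingSubgroup hk₁).not.mpr ha, k₁ * k₂,
      mul_mem hk₁ hk₂, ?_⟩
    rw [mul_swap_eq_swap_mul, mem_fixingSubgroup_perm_iff.mp hk₁ i hi, mul_assoc]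
  · rintro ⟨b, hb, k, hk, rfl⟩
    refine ⟨swap a b, swap_mem_fixingSubgroup ha hb, swap a b * k,
      mul_mem (swap_mem_fixingSubgroup ha hb) hk, ?_⟩
    rw [← mul_assoc, swap_mul_swap_mul_swap (ne_of_mem_of_not_mem hi ha)
      (ne_of_mem_of_not_mem hi hb), swap_comm]

theorem eq_and_eq_of_swap_mul_eq_swap_mul (hi : i ∈ s) {k k' : Perm X}
    (hk : k ∈ fixingSubgroup (Perm X) s) (hk' : k' ∈ fixingSubgroup (Perm X) s)
    (h : swap i b * k = swap i c * k') :
    b = c ∧ k = k' := by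
  have hbc : b = c := by
    simpa [mem_fixingSubgroup_perm_iff.mp hk i hi, mem_fixingSubgroup_perm_iff.mp hk' i hi]
      using congr($h i)
  subst hbc
  exact ⟨rfl, mul_left_cancel h⟩

end Perm

section GroupAlgebra
variable (R : Type*) {G : Type*} [CommSemiring R] [Group G] [Finite G]

noncomputable def subgroupSum (K : Subgroup G) : MonoidAlgebra R G :=
  ∑ k ∈ (Set.toFinite (K : Set G)).toFinset, single k 1

variable {R} {K : Subgroup G}

theorem single_mul_subgroupSum {k : G} (hk : k ∈ K) :
    single k (1 : R) * subgroupSum R K = subgroupSum R K := by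
  rw [subgroupSum, Finset.mul_sum]
  refine Finset.sum_equiv (Equiv.mulLeft k) (fun g => ?_) (fun g _ => ?_)
  · simp [K.mul_mem_cancel_left hk]
  · simp [single_mul_single]

theorem subgroupSum_mul_self :
    subgroupSum R K * subgroupSum R K = Nat.card K • subgroupSum R K := by
  calc subgroupSum R K * subgroupSum R K
      = ∑ k ∈ (Set.toFinite (K : Set G)).toFinset, single k (1 : R) * subgroupSum R K :=
        Finset.sum_mul ..
    _ = ∑ _k ∈ (Set.toFinite (K : Set G)).toFinset, subgroupSum R K :=
        Finset.sum_congr rfl fun k hk => single_mul_subgroupSum (by simpa using hk)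
    _ = Nat.card K • subgroupSum R K := by
        rw [Finset.sum_const, ← Set.ncard_eq_toFinset_card, ← Nat.card_coe_set_eq]; rfl

theorem subgroupSum_mul_comm {x : MonoidAlgebra R G}
    (hx : ∀ k ∈ K, single k (1 : R) * x = x * single k 1) :
    subgroupSum R K * x = x * subgroupSum R K := by
  rw [subgroupSum, Finset.sum_mul, Finset.mul_sum]
  exact Finset.sum_congr rfl fun k hk => hx k (by simpa using hk)

end GroupAlgebra

section SwapSum
variable (R : Type*) {X : Type*} [CommSemiring R] [Finite X] [DecidableEq X]

noncomputable def swapSum (s : Set X) (i : X) : MonoidAlgebra R (Perm X) :=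
  ∑ b ∈ (Set.toFinite sᶜ).toFinset, single (swap i b) 1

variable {R} {s : Set X} {i a b c : X}

theorem single_mul_swapSum_comm (hi : i ∈ s) {k : Perm X}
    (hk : k ∈ fixingSubgroup (Perm X) s) :
    single k (1 : R) * swapSum R s i = swapSum R s i * single k 1 := by
  rw [swapSum, Finset.mul_sum, Finset.sum_mul]
  refine Finset.sum_equiv k (fun b => ?_) (fun b _ => ?_)
  · simp [apply_mem_iff_of_mem_fixingSubgroup hk]
  · rw [single_mul_single, single_mul_single, mul_swap_eq_swap_mul,
      mem_fixingSubgroup_perm_iff.mp hk i hi]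

theorem sum_doubleCoset_swap_eq_swapSum_mul (hi : i ∈ s) (ha : a ∉ s) :
    ∑ h ∈ (Set.toFinite {h | ∃ k₁ ∈ fixingSubgroup (Perm X) s,
        ∃ k₂ ∈ fixingSubgroup (Perm X) s, h = k₁ * swap i a * k₂}).toFinset,
        single h (1 : R) =
      swapSum R s i * subgroupSum R (fixingSubgroup (Perm X) s) := by
  rw [swapSum, subgroupSum, Finset.sum_mul_sum, ← Finset.sum_product']
  simp_rw [single_mul_single, one_mul]
  symm
  refine Finset.sum_nbij (fun p => swap i p.1 * p.2) (fun p hp => ?_)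
    (fun p hp q hq hpq => ?_) (fun h hh => ?_) fun _ _ => rfl <;>
    simp only [Finset.coe_product, Set.mem_prod, Finset.mem_product,
      Set.Finite.mem_toFinset, Set.mem_compl_iff, SetLike.mem_coe, Set.mem_ofPred_eq] at *
  · exact (mem_doubleCoset_swap_iff hi ha).mpr ⟨p.1, hp.1, p.2, hp.2, rfl⟩
  · exact Prod.ext_iff.mpr (eq_and_eq_of_swap_mul_eq_swap_mul hi hp.2 hq.2 hpq)
  · obtain ⟨b, hb, k, hk, rfl⟩ := (mem_doubleCoset_swap_iff hi ha).mp hh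
    exact ⟨(b, k), by simp [hb, hk]⟩

theorem single_swap_mul_swap_mul_subgroupSum (hi : i ∈ s) (hb : b ∉ s) (hc : c ∉ s) :
    single (swap i b * swap i c) (1 : R) * subgroupSum R (fixingSubgroup (Perm X) s) =
      if b = c then subgroupSum R (fixingSubgroup (Perm X) s)
      else single (swap i c) 1 * subgroupSum R (fixingSubgroup (Perm X) s) := by
  split_ifs with hbc
  · rw [hbc, swap_mul_self, single_mul_subgroupSum (one_mem _)]
  · have hsplit : single (swap i c * swap b c) (1 : R) =
        single (swap i c) 1 * single (swap b c) 1 := by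
      rw [single_mul_single, mul_one]
    rw [swap_mul_swap_eq_swap_mul_swap (ne_of_mem_of_not_mem hi hb)
        (ne_of_mem_of_not_mem hi hc) hbc, hsplit, mul_assoc,
      single_mul_subgroupSum (swap_mem_fixingSubgroup hb hc)]

end SwapSum

section SwapSumSq
variable {R : Type*} {X : Type*} [CommRing R] [Finite X] [DecidableEq X] {s : Set X} {i : X}

theorem swapSum_mul_swapSum_mul_subgroupSum (hi : i ∈ s) :
    swapSum R s i * swapSum R s i * subgroupSum R (fixingSubgroup (Perm X) s) =
      (Nat.card ↥sᶜ : R) • subgroupSum R (fixingSubgroup (Perm X) s) +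
        ((Nat.card ↥sᶜ : R) - 1) •
          (swapSum R s i * subgroupSum R (fixingSubgroup (Perm X) s)) := by
  set E := subgroupSum R (fixingSubgroup (Perm X) s)
  set B := (Set.toFinite sᶜ).toFinset
  have hcard : (Nat.card ↥sᶜ : R) = B.card := by
    rw [Nat.card_coe_set_eq, Set.ncard_eq_toFinset_card _ (Set.toFinite sᶜ)]
  have hinner : ∀ c ∈ B, ∑ b ∈ B, single (swap i b * swap i c) (1 : R) * E =
      E + ((B.card : R) - 1) • (single (swap i c) 1 * E) := by
    intro c hc
    have hcs : c ∉ s := by simpa [B] using hc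
    rw [Finset.sum_congr rfl fun b hb =>
        single_swap_mul_swap_mul_subgroupSum hi (by simpa [B] using hb) hcs,
      Finset.sum_ite, Finset.filter_eq', if_pos hc, Finset.sum_singleton, Finset.filter_ne',
      Finset.sum_const, Finset.card_erase_of_mem hc, ← Nat.cast_smul_eq_nsmul R,
      Nat.cast_pred (Finset.card_pos.mpr ⟨c, hc⟩)]
  calc swapSum R s i * swapSum R s i * E
      = ∑ c ∈ B, ∑ b ∈ B, single (swap i b * swap i c) (1 : R) * E := by
        rw [swapSum, Finset.sum_mul_sum, Finset.sum_mul]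
        simp_rw [Finset.sum_mul, single_mul_single, one_mul]
        exact Finset.sum_comm
    _ = ∑ c ∈ B, (E + ((B.card : R) - 1) • (single (swap i c) 1 * E)) :=
        Finset.sum_congr rfl hinner
    _ = _ := by
        rw [Finset.sum_add_distrib, Finset.sum_const, ← Finset.smul_sum, ← Finset.sum_mul,
          hcard, ← Nat.cast_smul_eq_nsmul R]
        rfl

theorem swapSum_mul_subgroupSum_mul_self (hi : i ∈ s) :
    swapSum R s i * subgroupSum R (fixingSubgroup (Perm X) s) *
        (swapSum R s i * subgroupSum R (fixingSubgroup (Perm X) s)) =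
      (Nat.card (fixingSubgroup (Perm X) s) : R) •
        ((Nat.card ↥sᶜ : R) • subgroupSum R (fixingSubgroup (Perm X) s) +
          ((Nat.card ↥sᶜ : R) - 1) •
            (swapSum R s i * subgroupSum R (fixingSubgroup (Perm X) s))) := by
  set E := subgroupSum R (fixingSubgroup (Perm X) s)
  set T := swapSum R s i
  have hcomm : E * T = T * E := subgroupSum_mul_comm fun k hk => single_mul_swapSum_comm hi hk
  calc T * E * (T * E) = T * T * E * E := by
        rw [mul_assoc T, ← mul_assoc E, hcomm]
        simp only [mul_assoc]
    _ = _ := by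
      rw [mul_assoc (T * T), subgroupSum_mul_self, mul_smul_comm,
        swapSum_mul_swapSum_mul_subgroupSum hi]
      exact (Nat.cast_smul_eq_nsmul R _ _).symm

end SwapSumSq

theorem Fin.natCard_compl_setOf_val_lt (α n : ℕ) :
    Nat.card ↥{x : Fin (α + n) | (x : ℕ) < α}ᶜ = n := by
  have hrange : {x : Fin (α + n) | (x : ℕ) < α}ᶜ = Set.range (Fin.natAdd α) := by
    ext x
    simp [Fin.range_natAdd]
  rw [hrange, Nat.card_range_of_injective (Fin.natAdd_injective _ _), Nat.card_fin]

/-- In `C[S_n\S_{α+n}/S_n]`, the element `θ_i` satisfies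
`θ_i² = (n−1)·θ_i + n·1`, where `1` is the unit `(1/n!)Σ_{k∈S_n} δ_k`. -/
theorem theta_sq (α n : ℕ) (hn : 0 < n) (i : Fin α) :
    theta α n hn i * theta α n hn i =
      ((n : ℂ) - 1) • theta α n hn i + (n : ℂ) • unitK α n := by
  have hi : Fin.castAdd n i ∈ {x : Fin (α + n) | (x : ℕ) < α} := i.2
  have ha : (⟨α, by omega⟩ : Fin (α + n)) ∉ {x : Fin (α + n) | (x : ℕ) < α} :=
    lt_irrefl α
  have htheta : theta α n hn i = (n.factorial : ℂ)⁻¹ •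
      (swapSum ℂ {x : Fin (α + n) | (x : ℕ) < α} (Fin.castAdd n i) *
        subgroupSum ℂ (fixFirst α n)) := by
    rw [theta, dosetElt, dcos]
    exact congrArg _ (sum_doubleCoset_swap_eq_swapSum_mul hi ha)
  have hunit : unitK α n = (n.factorial : ℂ)⁻¹ • subgroupSum ℂ (fixFirst α n) := rfl
  have hfact : (n.factorial : ℂ) ≠ 0 := Nat.cast_ne_zero.mpr n.factorial_ne_zero
  rw [htheta, hunit, smul_mul_smul_comm, fixFirst, swapSum_mul_subgroupSum_mul_self hi,
    Nat.card_fixingSubgroup_perm, Fin.natCard_compl_setOf_val_lt, smul_smul,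
    inv_mul_cancel_right₀ hfact]
  module
end

section
/- In C[S_n\S_{α+n}/S_n], for distinct i, j ≤ α, the commutator θ_j·θ_i − θ_i·θ_j equals a((i j))·(θ_j − θ_i), where a((i j)) = (1/n!)·Σ_{σ∈S_n} δ_{(i j)·σ}. -/
/-!
Let `e` be the averaging idempotent of `K = S_n` in `ℂ[S_{α+n}]` and `t_i = (i, α+1)`. The
stabiliser of `α+1` in `K` is `K ∩ t_i K t_i` and has `(n-1)!` elements, so `θ_i = n · e δ_{t_i} e`;
also `a((i j)) = δ_{(i j)} e` with `δ_{(i j)}` commuting with `e`. Expanding the middle `e`,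
`θ_j θ_i = (n² / n!) Σ_{k ∈ K} e δ_{t_j k t_i} e`. When `k` fixes `α+1` it commutes with `t_i`
and the term is `e δ_{t_j t_i} e`. Otherwise, writing `k = w k'` with `w = (α+1, k(α+1)) ∈ K` and
`k'` fixing `α+1`, the permutation `t_i w t_j` is the conjugate of `t_j w t_i` by `w`, so
`t_i k t_j ∈ K (t_j k t_i) K` and these terms cancel against those of `θ_i θ_j`. Hence the
commutator is `n (e δ_{t_j t_i} e - e δ_{t_i t_j} e)`, which is `a((i j)) (θ_j - θ_i)` because
`(i j) t_j = t_j t_i` and `(i j) t_i = t_i t_j`.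
-/

open Equiv

open MonoidAlgebra
open scoped Finset Nat

namespace Subgroup

variable {G : Type*} [Group G] [Finite G] {K : Subgroup G}

theorem card_toFinite_toFinset : (Set.toFinite (K : Set G)).toFinset.card = Nat.card K := by
  rw [← Set.ncard_eq_toFinset_card]
  exact (Nat.card_coe_set_eq _).symm

theorem card_filter_mul_mul_eq [DecidableEq G] [DecidablePred (· ∈ K)] {a b : G}
    (ha : a ∈ K) (hb : b ∈ K) (x : G) :
    #{p ∈ (Set.toFinite (K : Set G)).toFinset ×ˢ (Set.toFinite (K : Set G)).toFinset |
        p.1 * x * p.2 = a * x * b} =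
      #{u ∈ (Set.toFinite (K : Set G)).toFinset | x⁻¹ * u * x ∈ K} := by
  refine Finset.card_bij' (fun p _ => a⁻¹ * p.1) (fun u _ => (a * u, x⁻¹ * u⁻¹ * x * b))
    ?_ ?_ ?_ ?_
  · simp only [Finset.mem_filter, Finset.mem_product, Set.Finite.mem_toFinset, SetLike.mem_coe]
    rintro ⟨k₁, k₂⟩ ⟨⟨hk₁, hk₂⟩, hp⟩
    refine ⟨K.mul_mem (K.inv_mem ha) hk₁, ?_⟩
    have : x⁻¹ * (a⁻¹ * k₁) * x = b * k₂⁻¹ := by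
      rw [show a = k₁ * x * k₂ * b⁻¹ * x⁻¹ by rw [hp]; group]
      group
    exact this ▸ K.mul_mem hb (K.inv_mem hk₂)
  · simp only [Finset.mem_filter, Finset.mem_product, Set.Finite.mem_toFinset, SetLike.mem_coe]
    rintro u ⟨hu, hux⟩
    refine ⟨⟨K.mul_mem ha hu, ?_⟩, by group⟩
    have : x⁻¹ * u⁻¹ * x = (x⁻¹ * u * x)⁻¹ := by group
    exact this ▸ K.mul_mem (K.inv_mem hux) hb
  · simp only [Finset.mem_filter]
    rintro ⟨k₁, k₂⟩ ⟨-, hp⟩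
    simp only [Prod.mk.injEq, mul_inv_cancel_left, true_and]
    rw [show k₂ = x⁻¹ * k₁⁻¹ * (k₁ * x * k₂) by group, hp]
    group
  · intro u _
    simp

theorem sum_mul_mul_eq_card_smul_sum {M : Type*} [AddCommMonoid M] [DecidableEq G]
    [DecidablePred (· ∈ K)] (f : G → M) (x : G) :
    ∑ p ∈ (Set.toFinite (K : Set G)).toFinset ×ˢ (Set.toFinite (K : Set G)).toFinset,
        f (p.1 * x * p.2) =
      #{u ∈ (Set.toFinite (K : Set G)).toFinset | x⁻¹ * u * x ∈ K} •
        ∑ h ∈ (Set.toFinite {h | ∃ k₁ ∈ K, ∃ k₂ ∈ K, h = k₁ * x * k₂}).toFinset, f h := by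
  refine (Finset.sum_comp f (fun p : G × G => p.1 * x * p.2)).trans ?_
  rw [Finset.smul_sum]
  have himage : ((Set.toFinite (K : Set G)).toFinset ×ˢ (Set.toFinite (K : Set G)).toFinset).image
      (fun p => p.1 * x * p.2) =
        (Set.toFinite {h | ∃ k₁ ∈ K, ∃ k₂ ∈ K, h = k₁ * x * k₂}).toFinset := by
    ext h
    simp only [Finset.mem_image, Finset.mem_product, Set.Finite.mem_toFinset, SetLike.mem_coe,
      Set.mem_ofPred_eq, Prod.exists, and_assoc, exists_and_left, eq_comm (b := h)]
  rw [himage]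
  refine Finset.sum_congr rfl fun h hh => ?_
  obtain ⟨a, ha, b, hb, rfl⟩ := (Set.Finite.mem_toFinset _).1 hh
  rw [card_filter_mul_mul_eq ha hb]

end Subgroup

namespace MonoidAlgebra

variable (𝕜 : Type*) [Field 𝕜] {G : Type*} [Group G] [Finite G] (K : Subgroup G)

noncomputable def averaging : MonoidAlgebra 𝕜 G :=
  (Nat.card K : 𝕜)⁻¹ • ∑ k ∈ (Set.toFinite (K : Set G)).toFinset, single k 1

noncomputable def doubleCosetElt (x : G) : MonoidAlgebra 𝕜 G :=
  averaging 𝕜 K * single x 1 * averaging 𝕜 K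

variable {𝕜 K}

theorem single_mul_averaging {k : G} (hk : k ∈ K) :
    single k (1 : 𝕜) * averaging 𝕜 K = averaging 𝕜 K := by
  rw [averaging, mul_smul_comm, Finset.mul_sum]
  congr 1
  refine Finset.sum_equiv (Equiv.mulLeft k) (fun g => ?_) (fun g _ => by simp)
  simp [Subgroup.mul_mem_cancel_left K hk]

theorem averaging_mul_single {k : G} (hk : k ∈ K) :
    averaging 𝕜 K * single k (1 : 𝕜) = averaging 𝕜 K := by
  rw [averaging, smul_mul_assoc, Finset.sum_mul]
  congr 1
  refine Finset.sum_equiv (Equiv.mulRight k) (fun g => ?_) (fun g _ => by simp)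
  simp [Subgroup.mul_mem_cancel_right K hk]

theorem isIdempotentElem_averaging [CharZero 𝕜] : IsIdempotentElem (averaging 𝕜 K) := by
  unfold IsIdempotentElem
  nth_rw 1 [averaging]
  rw [smul_mul_assoc, Finset.sum_mul,
    Finset.sum_congr rfl fun k hk => single_mul_averaging ((Set.Finite.mem_toFinset _).1 hk),
    Finset.sum_const, Subgroup.card_toFinite_toFinset, ← Nat.cast_smul_eq_nsmul 𝕜, smul_smul,
    inv_mul_cancel₀ (by exact_mod_cast Nat.card_pos.ne'), one_smul]

theorem mul_averaging_mul (u v : MonoidAlgebra 𝕜 G) :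
    u * averaging 𝕜 K * v =
      (Nat.card K : 𝕜)⁻¹ • ∑ k ∈ (Set.toFinite (K : Set G)).toFinset, u * single k 1 * v := by
  rw [averaging, mul_smul_comm, smul_mul_assoc, Finset.mul_sum, Finset.sum_mul]

theorem doubleCosetElt_mul_mul {a b : G} (ha : a ∈ K) (hb : b ∈ K) (x : G) :
    doubleCosetElt 𝕜 K (a * x * b) = doubleCosetElt 𝕜 K x := by
  have hsplit : single (a * x * b) (1 : 𝕜) = single a 1 * single x 1 * single b 1 := by
    simp only [single_mul_single, mul_one]
  calc doubleCosetElt 𝕜 K (a * x * b)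
      = averaging 𝕜 K * single a 1 * single x 1 * (single b 1 * averaging 𝕜 K) := by
        rw [doubleCosetElt, hsplit]
        simp only [mul_assoc]
    _ = doubleCosetElt 𝕜 K x := by
        rw [averaging_mul_single ha, single_mul_averaging hb, doubleCosetElt, mul_assoc]

theorem doubleCosetElt_mul_doubleCosetElt [CharZero 𝕜] (x y : G) :
    doubleCosetElt 𝕜 K x * doubleCosetElt 𝕜 K y =
      (Nat.card K : 𝕜)⁻¹ • ∑ k ∈ (Set.toFinite (K : Set G)).toFinset,
        doubleCosetElt 𝕜 K (x * k * y) := by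
  calc doubleCosetElt 𝕜 K x * doubleCosetElt 𝕜 K y
      = averaging 𝕜 K * single x 1 * averaging 𝕜 K * (single y 1 * averaging 𝕜 K) := by
        simp only [doubleCosetElt, mul_assoc, ← mul_assoc (averaging 𝕜 K) (averaging 𝕜 K),
          isIdempotentElem_averaging.eq]
    _ = _ := by
        rw [mul_averaging_mul]
        refine congrArg _ (Finset.sum_congr rfl fun k _ => ?_)
        have hsplit : single (x * k * y) (1 : 𝕜) = single x 1 * single k 1 * single y 1 := by
          simp only [single_mul_single, mul_one]
        rw [doubleCosetElt, hsplit]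
        simp only [mul_assoc]

theorem single_mul_averaging_comm {g : G} (hg : ∀ k ∈ K, Commute g k) :
    single g (1 : 𝕜) * averaging 𝕜 K = averaging 𝕜 K * single g 1 := by
  calc single g (1 : 𝕜) * averaging 𝕜 K = single g 1 * averaging 𝕜 K * 1 := (mul_one _).symm
    _ = 1 * averaging 𝕜 K * single g 1 := by
        rw [mul_averaging_mul, mul_averaging_mul]
        refine congrArg _ (Finset.sum_congr rfl fun k hk => ?_)
        simp only [one_mul, mul_one, single_mul_single,
          (hg k ((Set.Finite.mem_toFinset _).1 hk)).eq]
    _ = averaging 𝕜 K * single g 1 := by rw [one_mul]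

theorem single_mul_averaging_mul_doubleCosetElt [CharZero 𝕜] {g : G}
    (hg : ∀ k ∈ K, Commute g k) (x : G) :
    single g (1 : 𝕜) * averaging 𝕜 K * doubleCosetElt 𝕜 K x = doubleCosetElt 𝕜 K (g * x) := by
  have hsplit : single (g * x) (1 : 𝕜) = single g 1 * single x 1 := by
    rw [single_mul_single, mul_one]
  calc single g (1 : 𝕜) * averaging 𝕜 K * doubleCosetElt 𝕜 K x
      = single g 1 * (averaging 𝕜 K * averaging 𝕜 K) * single x 1 * averaging 𝕜 K := by
        simp only [doubleCosetElt, mul_assoc]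
    _ = doubleCosetElt 𝕜 K (g * x) := by
        rw [isIdempotentElem_averaging.eq, single_mul_averaging_comm hg,
          doubleCosetElt, hsplit]
        simp only [mul_assoc]

theorem doubleCosetElt_eq_smul_sum [DecidableEq G] [DecidablePred (· ∈ K)] (x : G) :
    doubleCosetElt 𝕜 K x =
      ((#{u ∈ (Set.toFinite (K : Set G)).toFinset | x⁻¹ * u * x ∈ K} : 𝕜) / Nat.card K ^ 2) •
        ∑ h ∈ (Set.toFinite {h | ∃ k₁ ∈ K, ∃ k₂ ∈ K, h = k₁ * x * k₂}).toFinset, single h 1 := by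
  simp only [doubleCosetElt, averaging, smul_mul_assoc, mul_smul_comm, Finset.sum_mul,
    Finset.mul_sum, single_mul_single, mul_one]
  rw [← Finset.smul_sum, smul_smul, Finset.sum_comm, ← Finset.sum_product',
    Subgroup.sum_mul_mul_eq_card_smul_sum (fun h => single h (1 : 𝕜)), ← Nat.cast_smul_eq_nsmul 𝕜,
    smul_smul]
  congr 1
  ring

end MonoidAlgebra

namespace Equiv

theorem swap_mul_swap_eq_swap_mul_swap {X : Type*} [DecidableEq X] {a b c : X} (hab : a ≠ b)
    (hac : a ≠ c) : swap a b * swap b c = swap b c * swap a c := by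
  rw [swap_mul_eq_mul_swap, swap_inv, swap_apply_left, swap_apply_of_ne_of_ne hab hac]

theorem swap_mul_swap_mul_swap_eq_conj {X : Type*} [DecidableEq X] {a c d q : X}
    (hda : d ≠ a) (hdc : d ≠ c) (hqa : q ≠ a) (hqc : q ≠ c) (hqd : q ≠ d) :
    swap c a * swap a q * swap d a = swap a q * (swap d a * swap a q * swap c a) * swap a q := by
  simp only [← mul_assoc]
  rw [mul_swap_eq_swap_mul (swap c a * swap a q), mul_swap_eq_swap_mul (swap a q) d a,
    mul_assoc _ (swap a q) (swap a q), swap_mul_self, mul_one]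
  simp only [Perm.mul_apply, swap_apply_left, swap_apply_of_ne_of_ne hda hqd.symm,
    swap_apply_of_ne_of_ne hdc hda, swap_apply_of_ne_of_ne hqc hqa, mul_assoc]

theorem Perm.commute_swap {X : Type*} [DecidableEq X] {k : Perm X} {x y : X} (hx : k x = x)
    (hy : k y = y) : Commute (swap x y) k := by
  rw [Commute, SemiconjBy, mul_swap_eq_swap_mul, hx, hy]

theorem Perm.viaFintypeEmbedding_swap {X Y : Type*} [Fintype X] [DecidableEq X] [DecidableEq Y]
    (f : X ↪ Y) (x y : X) : (swap x y).viaFintypeEmbedding f = swap (f x) (f y) := by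
  ext z
  by_cases hz : z ∈ Set.range f
  · obtain ⟨z, rfl⟩ := hz
    rw [Perm.viaFintypeEmbedding_apply_image, f.injective.swap_apply]
  · rw [Perm.viaFintypeEmbedding_apply_notMem_range _ _ hz, swap_apply_of_ne_of_ne
      (fun h => hz ⟨x, h.symm⟩) (fun h => hz ⟨y, h.symm⟩)]

theorem Perm.card_fixingSubgroup {X : Type*} [Finite X] (s : Set X) :
    Nat.card (fixingSubgroup (Perm X) s) = (Nat.card ↥sᶜ)! := by
  classical
  rw [← Nat.card_perm]
  refine Nat.card_congr ((Equiv.subtypeEquivRight fun k => ?_).trans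
    (Perm.subtypeEquivSubtypePerm (· ∈ sᶜ)).symm)
  simp [mem_fixingSubgroup_iff, Perm.smul_def]

theorem Perm.card_fixingSubgroup_fin_lt (N m : ℕ) :
    Nat.card (fixingSubgroup (Perm (Fin N)) {i : Fin N | (i : ℕ) < m}) = (N - m)! := by
  rw [card_fixingSubgroup, Nat.card_coe_set_eq, Set.ncard_compl, Nat.card_fin,
    Set.ncard_eq_toFinset_card', Set.toFinset_ofPred, Fin.card_filter_val_lt]
  congr 1
  omega

end Equiv

section SymmetricGroup

variable {α n : ℕ}

local notation "𝒟" => doubleCosetElt ℂ (fixFirst _ _)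

theorem mem_fixFirst {k : Perm (Fin (α + n))} :
    k ∈ fixFirst α n ↔ ∀ x : Fin (α + n), (x : ℕ) < α → k x = x := by
  simp [fixFirst, mem_fixingSubgroup_iff, Perm.smul_def]

instance : DecidablePred (· ∈ fixFirst α n) := fun _ => decidable_of_iff _ mem_fixFirst.symm

theorem card_fixFirst : Nat.card (fixFirst α n) = n ! := by
  rw [fixFirst, Perm.card_fixingSubgroup_fin_lt, Nat.add_sub_cancel_left]

theorem card_filter_fixFirst_apply_eq {a : Fin (α + n)} (ha : (a : ℕ) = α) :
    #{k ∈ (Set.toFinite (fixFirst α n : Set (Perm (Fin (α + n))))).toFinset | k a = a} =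
      (n - 1)! := by
  have hstab : {k ∈ (Set.toFinite (fixFirst α n : Set (Perm (Fin (α + n))))).toFinset | k a = a} =
      (Set.toFinite (fixingSubgroup (Perm (Fin (α + n))) {i : Fin (α + n) | (i : ℕ) < α + 1} :
        Set (Perm (Fin (α + n))))).toFinset := by
    ext k
    simp only [Finset.mem_filter, Set.Finite.mem_toFinset, SetLike.mem_coe, mem_fixFirst,
      mem_fixingSubgroup_iff, Set.mem_ofPred_eq, Perm.smul_def]
    refine ⟨fun ⟨hk, hka⟩ x hx => ?_, fun hk => ⟨fun x hx => hk x (by omega), hk a (by omega)⟩⟩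
    rcases Nat.lt_succ_iff_lt_or_eq.1 hx with hx | hx
    · exact hk x hx
    · rwa [Fin.ext (hx.trans ha.symm)]
  rw [hstab, Subgroup.card_toFinite_toFinset, Perm.card_fixingSubgroup_fin_lt]
  congr 1
  omega

theorem castAdd_ne_of_val_eq {a : Fin (α + n)} (ha : (a : ℕ) = α) (i : Fin α) :
    Fin.castAdd n i ≠ a :=
  fun h => i.isLt.ne (by simpa [← h] using ha)

theorem apply_castAdd_of_mem_fixFirst {k : Perm (Fin (α + n))} (hk : k ∈ fixFirst α n)
    (i : Fin α) : k (Fin.castAdd n i) = Fin.castAdd n i :=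
  mem_fixFirst.1 hk _ i.isLt

theorem swap_inv_mul_mul_swap_mem_fixFirst_iff {a : Fin (α + n)} (i : Fin α)
    {u : Perm (Fin (α + n))} (hu : u ∈ fixFirst α n) :
    (swap (Fin.castAdd n i) a)⁻¹ * u * swap (Fin.castAdd n i) a ∈ fixFirst α n ↔ u a = a := by
  refine ⟨fun h => ?_, fun hua => ?_⟩
  · have := apply_castAdd_of_mem_fixFirst h i
    rwa [Perm.mul_apply, Perm.mul_apply, swap_apply_left, swap_inv, swap_apply_eq_iff,
      swap_apply_left] at this
  · rwa [mul_assoc, ← (Perm.commute_swap (apply_castAdd_of_mem_fixFirst hu i) hua).eq,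
      inv_mul_cancel_left]

theorem theta_eq_smul_doubleCosetElt (hn : 0 < n) {a : Fin (α + n)} (ha : (a : ℕ) = α)
    (i : Fin α) : theta α n hn i = (n : ℂ) • 𝒟 (swap (Fin.castAdd n i) a) := by
  rw [theta, show (⟨α, Nat.lt_add_of_pos_right hn⟩ : Fin (α + n)) = a from Fin.ext ha.symm]
  have hcount : #{u ∈ (Set.toFinite (fixFirst α n : Set (Perm (Fin (α + n))))).toFinset |
      (swap (Fin.castAdd n i) a)⁻¹ * u * swap (Fin.castAdd n i) a ∈ fixFirst α n} =
        (n - 1)! := by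
    rw [← card_filter_fixFirst_apply_eq ha]
    exact congrArg _ (Finset.filter_congr fun u hu =>
      swap_inv_mul_mul_swap_mem_fixFirst_iff i ((Set.Finite.mem_toFinset _).1 hu))
  rw [dosetElt, dcos, doubleCosetElt_eq_smul_sum, hcount, card_fixFirst, smul_smul,
    ← Nat.mul_factorial_pred hn.ne']
  congr 1
  push_cast
  field_simp

theorem aElt_eq_single_mul_averaging (g : Perm (Fin α)) :
    aElt α n g =
      single (g.viaFintypeEmbedding (Fin.castAddEmb n)) 1 * averaging ℂ (fixFirst α n) := by
  rw [aElt, averaging, card_fixFirst, mul_smul_comm, Finset.mul_sum]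
  simp only [single_mul_single, one_mul]

theorem doubleCosetElt_swap_mul_mul_swap_of_apply_eq {a : Fin (α + n)}
    {k : Perm (Fin (α + n))} (hk : k ∈ fixFirst α n) (hka : k a = a) (i j : Fin α) :
    𝒟 (swap (Fin.castAdd n i) a * k * swap (Fin.castAdd n j) a) =
      𝒟 (swap (Fin.castAdd n i) a * swap (Fin.castAdd n j) a) := by
  have h := doubleCosetElt_mul_mul (𝕜 := ℂ) (one_mem _) hk
    (swap (Fin.castAdd n i) a * swap (Fin.castAdd n j) a)
  rwa [one_mul, mul_assoc, (Perm.commute_swap (apply_castAdd_of_mem_fixFirst hk j) hka).eq,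
    ← mul_assoc] at h

theorem doubleCosetElt_swap_mul_mul_swap_of_apply_ne {a : Fin (α + n)} (ha : (a : ℕ) = α)
    {k : Perm (Fin (α + n))} (hk : k ∈ fixFirst α n) (hka : k a ≠ a) {i j : Fin α}
    (hij : i ≠ j) :
    𝒟 (swap (Fin.castAdd n i) a * k * swap (Fin.castAdd n j) a) =
      𝒟 (swap (Fin.castAdd n j) a * k * swap (Fin.castAdd n i) a) := by
  set ci := Fin.castAdd n i
  set cj := Fin.castAdd n j
  have hcia : ci ≠ a := castAdd_ne_of_val_eq ha i
  have hcja : cj ≠ a := castAdd_ne_of_val_eq ha j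
  have hqci : k a ≠ ci := fun h =>
    hcia (k.injective (h.trans (apply_castAdd_of_mem_fixFirst hk i).symm)).symm
  have hqcj : k a ≠ cj := fun h =>
    hcja (k.injective (h.trans (apply_castAdd_of_mem_fixFirst hk j).symm)).symm
  set w := swap a (k a)
  have hw : w ∈ fixFirst α n := mem_fixFirst.2 fun x hx => swap_apply_of_ne_of_ne
    (fun h => by have := congrArg Fin.val h; omega)
    (fun h => by subst h; exact hka (k.injective (mem_fixFirst.1 hk _ hx)))
  set k' := w * k
  have hk' : k' ∈ fixFirst α n := Subgroup.mul_mem _ hw hk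
  have hk'a : k' a = a := by simp [k', w, swap_apply_right]
  have hk_eq : k = w * k' := by rw [← mul_assoc, swap_mul_self, one_mul]
  have hci : Commute (swap ci a) k' :=
    Perm.commute_swap (apply_castAdd_of_mem_fixFirst hk' i) hk'a
  have hcj : Commute (swap cj a) k' :=
    Perm.commute_swap (apply_castAdd_of_mem_fixFirst hk' j) hk'a
  have hconj : swap ci a * k * swap cj a = w * (swap cj a * k * swap ci a) * (k'⁻¹ * w * k') :=
    calc swap ci a * k * swap cj a = swap ci a * w * swap cj a * k' := by
          rw [hk_eq]
          simp only [mul_assoc, ← hcj.eq]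
      _ = w * (swap cj a * w * swap ci a) * w * k' := by
          rw [swap_mul_swap_mul_swap_eq_conj hcja ((Fin.castAdd_injective α n).ne hij.symm)
            hka hqci hqcj]
      _ = w * (swap cj a * k * swap ci a) * (k'⁻¹ * w * k') := by
          rw [hk_eq]
          simp only [mul_assoc, ← hci.eq, mul_inv_cancel_left]
  rw [hconj, doubleCosetElt_mul_mul hw (mul_mem (mul_mem (inv_mem hk') hw) hk')]

theorem sum_doubleCosetElt_swap_mul_mul_swap_sub {a : Fin (α + n)} (ha : (a : ℕ) = α)
    {i j : Fin α} (hij : i ≠ j) :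
    ∑ k ∈ (Set.toFinite (fixFirst α n : Set (Perm (Fin (α + n))))).toFinset,
        (𝒟 (swap (Fin.castAdd n j) a * k * swap (Fin.castAdd n i) a) -
          𝒟 (swap (Fin.castAdd n i) a * k * swap (Fin.castAdd n j) a)) =
      ((n - 1)! : ℂ) • (𝒟 (swap (Fin.castAdd n j) a * swap (Fin.castAdd n i) a) -
        𝒟 (swap (Fin.castAdd n i) a * swap (Fin.castAdd n j) a)) := by
  rw [← Finset.sum_filter_add_sum_filter_not _ (fun k => k a = a), ← add_zero (_ • _)]
  congr 1
  · rw [← card_filter_fixFirst_apply_eq ha, Nat.cast_smul_eq_nsmul, ← Finset.sum_const]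
    refine Finset.sum_congr rfl fun k hk => ?_
    rw [Finset.mem_filter, Set.Finite.mem_toFinset] at hk
    rw [doubleCosetElt_swap_mul_mul_swap_of_apply_eq hk.1 hk.2,
      doubleCosetElt_swap_mul_mul_swap_of_apply_eq hk.1 hk.2]
  · refine Finset.sum_eq_zero fun k hk => ?_
    rw [Finset.mem_filter, Set.Finite.mem_toFinset] at hk
    rw [doubleCosetElt_swap_mul_mul_swap_of_apply_ne ha hk.1 hk.2 hij.symm, sub_self]

theorem doubleCosetElt_commutator {a : Fin (α + n)} (ha : (a : ℕ) = α) {i j : Fin α}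
    (hij : i ≠ j) :
    𝒟 (swap (Fin.castAdd n j) a) * 𝒟 (swap (Fin.castAdd n i) a) -
        𝒟 (swap (Fin.castAdd n i) a) * 𝒟 (swap (Fin.castAdd n j) a) =
      (n : ℂ)⁻¹ • (𝒟 (swap (Fin.castAdd n j) a * swap (Fin.castAdd n i) a) -
        𝒟 (swap (Fin.castAdd n i) a * swap (Fin.castAdd n j) a)) := by
  have hn : 0 < n := by have := a.isLt; omega
  have hfact : ((n - 1)! : ℂ) ≠ 0 := Nat.cast_ne_zero.2 (Nat.factorial_ne_zero _)
  rw [doubleCosetElt_mul_doubleCosetElt, doubleCosetElt_mul_doubleCosetElt, ← smul_sub,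
    ← Finset.sum_sub_distrib, sum_doubleCosetElt_swap_mul_mul_swap_sub ha hij, card_fixFirst,
    smul_smul, ← Nat.mul_factorial_pred hn.ne']
  congr 1
  push_cast
  field_simp

end SymmetricGroup

/-- In `C[S_n\S_{α+n}/S_n]`, for distinct `i, j ≤ α` the commutator
`θ_j·θ_i − θ_i·θ_j` equals `a((i j))·(θ_j − θ_i)`. -/
theorem theta_commutator (α n : ℕ) (hn : 0 < n) (i j : Fin α) (hij : i ≠ j) :
    theta α n hn j * theta α n hn i - theta α n hn i * theta α n hn j =
      aElt α n (Equiv.swap i j) * (theta α n hn j - theta α n hn i) := by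
  let a : Fin (α + n) := ⟨α, by omega⟩
  have ha : (a : ℕ) = α := rfl
  have hcij : Fin.castAdd n i ≠ Fin.castAdd n j := (Fin.castAdd_injective α n).ne hij
  have hcomm : ∀ k ∈ fixFirst α n, Commute (swap (Fin.castAdd n i) (Fin.castAdd n j)) k :=
    fun k hk => Perm.commute_swap (apply_castAdd_of_mem_fixFirst hk i)
      (apply_castAdd_of_mem_fixFirst hk j)
  have hs_tj : swap (Fin.castAdd n i) (Fin.castAdd n j) * swap (Fin.castAdd n j) a =
      swap (Fin.castAdd n j) a * swap (Fin.castAdd n i) a :=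
    swap_mul_swap_eq_swap_mul_swap hcij (castAdd_ne_of_val_eq ha i)
  have hs_ti : swap (Fin.castAdd n i) (Fin.castAdd n j) * swap (Fin.castAdd n i) a =
      swap (Fin.castAdd n i) a * swap (Fin.castAdd n j) a := by
    rw [swap_comm]
    exact swap_mul_swap_eq_swap_mul_swap hcij.symm (castAdd_ne_of_val_eq ha j)
  have hn' : (n : ℂ) ≠ 0 := Nat.cast_ne_zero.2 hn.ne'
  rw [theta_eq_smul_doubleCosetElt hn ha, theta_eq_smul_doubleCosetElt hn ha,
    smul_mul_smul_comm, smul_mul_smul_comm, ← smul_sub, doubleCosetElt_commutator ha hij,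
    aElt_eq_single_mul_averaging, Perm.viaFintypeEmbedding_swap, Fin.castAddEmb_apply,
    Fin.castAddEmb_apply, mul_sub, mul_smul_comm, mul_smul_comm,
    single_mul_averaging_mul_doubleCosetElt hcomm, single_mul_averaging_mul_doubleCosetElt hcomm,
    hs_tj, hs_ti, smul_smul, ← smul_sub, mul_assoc, mul_inv_cancel₀ hn', mul_one]
end

section
/- In C[S_n\S_{α+n}/S_n], for distinct i, j ≤ α one has (a((i j)) − 1)·θ_j·(θ_i + 1) = 0, where 1 is the unit of the double coset algebra. -/
open Equiv

/-!
Write `e` for the unit `unitK` (the averaging idempotent of `S_n`), `w = (i j)`, and `N` for the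
last `n` points. The double coset `S_n (i, α+1) S_n` is the disjoint union of the left cosets
`(i m) S_n`, `m ∈ N`, so `θ_i = Z e` with `Z = Σ_{m ∈ N} δ_(i m)`; moreover `e θ = θ` and
`a((i j)) = δ_w e`. Hence `(a((i j)) - 1) θ_j (θ_i + 1) = (δ_w - 1) Y (Z + 1) e` with
`Y (Z + 1) = Σ_{m ∈ N} Σ_{m' ∈ {i} ∪ N} δ_((j m)(i m'))`.
Now `w (j m) = (j m)(i m)` and `(i m)(i m') ∈ (i σ(m')) S_n` for `σ = (i m)`, a permutation of
`{i} ∪ N`; so left multiplication by `w` permutes the cosets `(j m)(i m') S_n` and fixes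
`Y (Z + 1) e`.
-/

open MonoidAlgebra

theorem MonoidAlgebra.single_one_mul_sum_single {G R : Type*} [Group G] [Semiring R]
    {s : Finset G} {g : G} (hs : ∀ h, g * h ∈ s ↔ h ∈ s) :
    single g (1 : R) * ∑ h ∈ s, single h 1 = ∑ h ∈ s, single h 1 := by
  simp only [Finset.mul_sum, single_mul_single, one_mul]
  exact Finset.sum_equiv (Equiv.mulLeft g) (fun h => (hs h).symm) (fun _ _ => rfl)

theorem Equiv.Perm.viaFintypeEmbedding_swap_s15 {α β : Type*} [Fintype α] [DecidableEq α]
    [DecidableEq β] (f : α ↪ β) (a b : α) :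
    (swap a b).viaFintypeEmbedding f = swap (f a) (f b) := by
  ext x
  by_cases hx : x ∈ Set.range f
  · obtain ⟨y, rfl⟩ := hx
    simp [swap_apply_def, apply_ite f]
  · rw [viaFintypeEmbedding_apply_notMem_range _ _ hx, swap_apply_of_ne_of_ne] <;>
      rintro rfl <;> exact hx ⟨_, rfl⟩

variable {α n : ℕ}

theorem mem_fixFirst_iff {σ : Perm (Fin (α + n))} :
    σ ∈ fixFirst α n ↔ ∀ x : Fin (α + n), (x : ℕ) < α → σ x = x :=
  mem_fixingSubgroup_iff _

theorem swap_mem_fixFirst {a b : Fin (α + n)} (ha : α ≤ (a : ℕ)) (hb : α ≤ (b : ℕ)) :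
    swap a b ∈ fixFirst α n :=
  mem_fixFirst_iff.2 fun x hx =>
    swap_apply_of_ne_of_ne (by rintro rfl; omega) (by rintro rfl; omega)

theorem le_val_apply_of_mem_fixFirst {k : Perm (Fin (α + n))} (hk : k ∈ fixFirst α n)
    {x : Fin (α + n)} (hx : α ≤ (x : ℕ)) : α ≤ (k x : ℕ) := by
  by_contra hlt
  have := mem_fixFirst_iff.1 hk _ (not_le.1 hlt)
  rw [k.injective this] at hlt
  omega

theorem mem_toFinset_fixFirst {σ : Perm (Fin (α + n))} :
    σ ∈ (Set.toFinite (fixFirst α n : Set (Perm (Fin (α + n))))).toFinset ↔ σ ∈ fixFirst α n := by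
  rw [Set.Finite.mem_toFinset, SetLike.mem_coe]

theorem card_subtype_le_val : Fintype.card {x : Fin (α + n) // α ≤ (x : ℕ)} = n := by
  have := Fintype.card_subtype_compl (fun x : Fin (α + n) => (x : ℕ) < α)
  simp only [not_lt] at this
  rw [this, Fintype.card_subtype, Fin.card_filter_val_lt, Fintype.card_fin]
  omega

theorem card_toFinset_fixFirst :
    (Set.toFinite (fixFirst α n : Set (Perm (Fin (α + n))))).toFinset.card = n.factorial := by
  rw [← Nat.card_eq_card_finite_toFinset, SetLike.coe_sort_coe,
    Nat.card_congr ((Equiv.subtypeEquivRight fun σ => ?_).trans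
      (Perm.subtypeEquivSubtypePerm fun x : Fin (α + n) => α ≤ (x : ℕ)).symm),
    Nat.card_eq_fintype_card, Fintype.card_perm, card_subtype_le_val]
  simp only [mem_fixFirst_iff, not_le]

theorem mem_dcos_iff {t h : Perm (Fin (α + n))} :
    h ∈ dcos α n t ↔ ∃ k₁ ∈ fixFirst α n, ∃ k₂ ∈ fixFirst α n, h = k₁ * t * k₂ := by
  rw [dcos, Set.Finite.mem_toFinset, Set.mem_ofPred_eq]

theorem single_mul_unitK {k : Perm (Fin (α + n))} (hk : k ∈ fixFirst α n) :
    single k (1 : ℂ) * unitK α n = unitK α n := by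
  rw [unitK, mul_smul_comm, single_one_mul_sum_single fun h => by
    simp only [mem_toFinset_fixFirst, Subgroup.mul_mem_cancel_left _ hk]]

theorem single_mul_mul_unitK (g : Perm (Fin (α + n))) {k : Perm (Fin (α + n))}
    (hk : k ∈ fixFirst α n) : single (g * k) (1 : ℂ) * unitK α n = single g 1 * unitK α n := by
  rw [← one_mul (1 : ℂ), ← single_mul_single, mul_assoc, single_mul_unitK hk, one_mul]

theorem single_mul_dosetElt {k : Perm (Fin (α + n))} (hk : k ∈ fixFirst α n)
    (t : Perm (Fin (α + n))) : single k (1 : ℂ) * dosetElt α n t = dosetElt α n t := by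
  rw [dosetElt, mul_smul_comm, single_one_mul_sum_single fun h => ?_]
  simp only [mem_dcos_iff]
  constructor
  · rintro ⟨k₁, hk₁, k₂, hk₂, he⟩
    exact ⟨k⁻¹ * k₁, mul_mem (inv_mem hk) hk₁, k₂, hk₂, by rw [eq_inv_mul_of_mul_eq he]; group⟩
  · rintro ⟨k₁, hk₁, k₂, hk₂, rfl⟩
    exact ⟨k * k₁, mul_mem hk hk₁, k₂, hk₂, by group⟩

theorem unitK_mul_of_forall_single_mul {x : MonoidAlgebra ℂ (Perm (Fin (α + n)))}
    (hx : ∀ k ∈ fixFirst α n, single k (1 : ℂ) * x = x) : unitK α n * x = x := by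
  rw [unitK, smul_mul_assoc, Finset.sum_mul,
    Finset.sum_congr rfl fun k hk => hx k (mem_toFinset_fixFirst.1 hk), Finset.sum_const,
    card_toFinset_fixFirst, ← Nat.cast_smul_eq_nsmul ℂ, smul_smul,
    inv_mul_cancel₀ (Nat.cast_ne_zero.2 n.factorial_ne_zero), one_smul]

theorem unitK_mul_unitK : unitK α n * unitK α n = unitK α n :=
  unitK_mul_of_forall_single_mul fun _ => single_mul_unitK

theorem unitK_mul_dosetElt (t : Perm (Fin (α + n))) :
    unitK α n * dosetElt α n t = dosetElt α n t :=
  unitK_mul_of_forall_single_mul fun _ hk => single_mul_dosetElt hk t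

theorem aElt_eq_single_mul_unitK (g : Perm (Fin α)) :
    aElt α n g = single (g.viaFintypeEmbedding (Fin.castAddEmb n)) (1 : ℂ) * unitK α n := by
  simp only [aElt, unitK, mul_smul_comm, Finset.mul_sum, single_mul_single, one_mul]

def lastPoints (α n : ℕ) : Finset (Fin (α + n)) :=
  Finset.univ.filter fun m => α ≤ (m : ℕ)

theorem mem_lastPoints {m : Fin (α + n)} : m ∈ lastPoints α n ↔ α ≤ (m : ℕ) := by
  simp [lastPoints]

section

variable {y A : Fin (α + n)} (hy : (y : ℕ) < α) (hA : α ≤ (A : ℕ))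
include hy hA

theorem swap_mul_mem_dcos_swap {m : Fin (α + n)} (hm : α ≤ (m : ℕ)) {k : Perm (Fin (α + n))}
    (hk : k ∈ fixFirst α n) : swap y m * k ∈ dcos α n (swap y A) := by
  refine mem_dcos_iff.2 ⟨swap A m, swap_mem_fixFirst hA hm, swap A m * k,
    mul_mem (swap_mem_fixFirst hA hm) hk, ?_⟩
  rw [← mul_assoc, swap_mul_swap_mul_swap (by rintro rfl; omega) (by rintro rfl; omega),
    swap_comm]

theorem le_val_apply_of_mem_dcos_swap {h : Perm (Fin (α + n))} (hh : h ∈ dcos α n (swap y A)) :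
    α ≤ (h y : ℕ) := by
  obtain ⟨k₁, hk₁, k₂, hk₂, rfl⟩ := mem_dcos_iff.1 hh
  simpa [mem_fixFirst_iff.1 hk₂ y hy] using le_val_apply_of_mem_fixFirst hk₁ hA

theorem swap_mul_mem_fixFirst_of_mem_dcos_swap {h : Perm (Fin (α + n))}
    (hh : h ∈ dcos α n (swap y A)) : swap y (h y) * h ∈ fixFirst α n := by
  have hhy := le_val_apply_of_mem_dcos_swap hy hA hh
  obtain ⟨k₁, hk₁, k₂, hk₂, rfl⟩ := mem_dcos_iff.1 hh
  refine mem_fixFirst_iff.2 fun x hx => ?_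
  rcases eq_or_ne x y with rfl | hxy
  · exact swap_apply_right _ _
  have hxA : x ≠ A := by rintro rfl; omega
  have hhx : (k₁ * swap y A * k₂) x = x := by
    simp [mem_fixFirst_iff.1 hk₂ x hx, swap_apply_of_ne_of_ne hxy hxA, mem_fixFirst_iff.1 hk₁ x hx]
  rw [Perm.mul_apply, hhx, swap_apply_of_ne_of_ne hxy (by rintro rfl; omega)]

theorem dosetElt_swap_eq_sum_mul_unitK :
    dosetElt α n (swap y A)
      = (∑ m ∈ lastPoints α n, single (swap y m) (1 : ℂ)) * unitK α n := by
  rw [dosetElt, unitK, mul_smul_comm, Finset.sum_mul_sum, ← Finset.sum_product']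
  simp only [single_mul_single, one_mul]
  congr 1
  refine Finset.sum_nbij' (fun h => (h y, swap y (h y) * h)) (fun p => swap y p.1 * p.2)
    (fun h hh => ?_) (fun p hp => ?_) (fun h _ => ?_) (fun p hp => ?_) (fun h _ => ?_)
  · exact Finset.mem_product.2 ⟨mem_lastPoints.2 (le_val_apply_of_mem_dcos_swap hy hA hh),
      mem_toFinset_fixFirst.2 (swap_mul_mem_fixFirst_of_mem_dcos_swap hy hA hh)⟩
  · obtain ⟨hm, hk⟩ := Finset.mem_product.1 hp
    exact swap_mul_mem_dcos_swap hy hA (mem_lastPoints.1 hm) (mem_toFinset_fixFirst.1 hk)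
  · simp
  · have hk := mem_toFinset_fixFirst.1 (Finset.mem_product.1 hp).2
    simp [mem_fixFirst_iff.1 hk y hy]
  · simp

end

theorem theta_eq_sum_mul_unitK (hn : 0 < n) (i : Fin α) :
    theta α n hn i
      = (∑ m ∈ lastPoints α n, single (swap (Fin.castAdd n i) m) (1 : ℂ)) * unitK α n :=
  dosetElt_swap_eq_sum_mul_unitK i.isLt le_rfl

theorem unitK_mul_theta (hn : 0 < n) (i : Fin α) :
    unitK α n * theta α n hn i = theta α n hn i :=
  unitK_mul_dosetElt _

theorem sum_single_swap_add_one {i : Fin (α + n)} (hi : (i : ℕ) < α) :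
    ∑ m ∈ lastPoints α n, single (swap i m) (1 : ℂ) + 1
      = ∑ m ∈ insert i (lastPoints α n), single (swap i m) 1 := by
  rw [Finset.sum_insert fun h => by have := mem_lastPoints.1 h; omega, swap_self,
    ← Perm.one_def, ← MonoidAlgebra.one_def]
  exact add_comm _ _

theorem swap_mem_insert_lastPoints_iff {i m x : Fin (α + n)} (hm : α ≤ (m : ℕ)) :
    swap i m x ∈ insert i (lastPoints α n) ↔ x ∈ insert i (lastPoints α n) := by
  simp only [Finset.mem_insert, mem_lastPoints, swap_apply_def]
  split_ifs with h1 h2 <;> subst_vars <;> simp [hm]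

section

variable {i j : Fin (α + n)} (hi : (i : ℕ) < α) (hij : i ≠ j)
include hi hij

theorem single_swap_mul_single_mul_unitK {m m' : Fin (α + n)} (hm : α ≤ (m : ℕ))
    (hm' : m' ∈ insert i (lastPoints α n)) :
    single (swap i j) (1 : ℂ) * (single (swap j m * swap i m') 1 * unitK α n)
      = single (swap j m * swap i (swap i m m')) 1 * unitK α n := by
  have hmi : m ≠ i := by rintro rfl; omega
  have hcycle : swap i j * swap j m = swap j m * swap i m := by
    calc swap i j * swap j m = swap j m * (swap j m * swap i j * swap j m) := by
          simp only [mul_assoc, swap_mul_self_mul]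
      _ = swap j m * swap i m := by rw [swap_mul_swap_mul_swap hij hmi.symm, swap_comm m i]
  rw [← mul_assoc, single_mul_single, one_mul, ← mul_assoc, hcycle, mul_assoc]
  rcases Finset.mem_insert.1 hm' with rfl | hm'L
  · rw [swap_self, swap_apply_left, ← Perm.one_def, mul_one]
  rcases eq_or_ne m' m with rfl | hm'm
  · rw [swap_apply_right, swap_self, ← Perm.one_def, swap_mul_self]
  have hm'i : m' ≠ i := by rintro rfl; have := mem_lastPoints.1 hm'L; omega
  have hswap : swap i m * swap i m' = swap i m' * swap m' m := by
    rw [← swap_mul_swap_mul_swap hmi hm'm.symm, swap_comm m i]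
    simp only [mul_assoc, swap_mul_self_mul]
  rw [swap_apply_of_ne_of_ne hm'i hm'm, hswap, ← mul_assoc,
    single_mul_mul_unitK _ (swap_mem_fixFirst (mem_lastPoints.1 hm'L) hm)]

theorem single_swap_mul_sum_mul_unitK :
    single (swap i j) (1 : ℂ) * ((∑ m ∈ lastPoints α n, ∑ m' ∈ insert i (lastPoints α n),
        single (swap j m * swap i m') 1) * unitK α n)
      = (∑ m ∈ lastPoints α n, ∑ m' ∈ insert i (lastPoints α n),
        single (swap j m * swap i m') 1) * unitK α n := by
  simp only [Finset.sum_mul, Finset.mul_sum]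
  refine Finset.sum_congr rfl fun m hm => ?_
  rw [Finset.sum_congr rfl fun m' hm' =>
    single_swap_mul_single_mul_unitK hi hij (mem_lastPoints.1 hm) hm']
  exact Finset.sum_equiv (swap i m)
    (fun x => (swap_mem_insert_lastPoints_iff (mem_lastPoints.1 hm)).symm) fun _ _ => rfl

end

/-- In `C[S_n\S_{α+n}/S_n]`, for distinct `i, j ≤ α` one has
`(a((i j)) − 1)·θ_j·(θ_i + 1) = 0`, where `1` is the unit of the double coset
algebra. -/
theorem rel_five (α n : ℕ) (hn : 0 < n) (i j : Fin α) (hij : i ≠ j) :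
    (aElt α n (Equiv.swap i j) - unitK α n) * theta α n hn j *
        (theta α n hn i + unitK α n) = 0 := by
  set i' := Fin.castAdd n i
  set j' := Fin.castAdd n j
  set e := unitK α n
  set Y := ∑ m ∈ lastPoints α n, single (swap j' m) (1 : ℂ)
  set Z := ∑ m ∈ lastPoints α n, single (swap i' m) (1 : ℂ)
  have ha : aElt α n (swap i j) = single (swap i' j') 1 * e := by
    rw [aElt_eq_single_mul_unitK, Perm.viaFintypeEmbedding_swap_s15]; rfl
  calc (aElt α n (swap i j) - e) * theta α n hn j * (theta α n hn i + e)
      = (single (swap i' j') 1 - 1) * (e * theta α n hn j) * (theta α n hn i + e) := by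
        rw [ha]; noncomm_ring
    _ = (single (swap i' j') 1 - 1) * (Y * (e * theta α n hn i + e * e)) := by
        rw [unitK_mul_theta, theta_eq_sum_mul_unitK]; noncomm_ring
    _ = (single (swap i' j') 1 - 1) * (Y * (Z + 1) * e) := by
        rw [unitK_mul_theta, unitK_mul_unitK, theta_eq_sum_mul_unitK]; noncomm_ring
    _ = 0 := by
        rw [sum_single_swap_add_one i.isLt, Finset.sum_mul_sum]
        simp only [single_mul_single, one_mul]
        rw [sub_mul, one_mul,
          single_swap_mul_sum_mul_unitK i.isLt ((Fin.castAdd_injective α n).ne hij), sub_self]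
end

section
/- In the abstract algebra O[α;ν] defined by generators A(g) (g ∈ S_α), Θ_1,…,Θ_α and relations A(g₁)A(g₂)=A(g₁g₂), A(g)Θ_iA(g⁻¹)=Θ_{g(i)}, Θ_j²=(ν−1)Θ_j+νA(1), Θ_jΘ_i−Θ_iΘ_j=A((ij))(Θ_j−Θ_i), (A((ij))−A(1))Θ_j(Θ_i+A(1))=0, the elements A(g)Θ_{i_1}⋯Θ_{i_k} with i_1<⋯<i_k and g(i_1)<⋯<g(i_k) span O[α;ν]; hence dim O[α;ν] ≤ #Π_α. -/
/-!
A word `A(g) Θ_{i₁} ⋯ Θ_{i_k}` is straightened by three rewriting rules, each producing words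
that are shorter or smaller in a lexicographic measure. If `i_p = i_{p+1}`, the quadratic relation
shortens the word. If `i_p > i_{p+1}`, the commutation relation swaps them at the cost of shorter
words, once `A((i_p i_{p+1}))` is moved to the front past the `Θ`'s before it. If the indices
increase but `g(i_p) > g(i_{p+1})`, conjugating the last relation by `τ = A((i j))` gives
`τ Θ_i Θ_j = Θ_i Θ_j + Θ_i − τ Θ_i`, which replaces `g` by `g (i j)` modulo shorter words. The
measure is (length, inversions of the indices, inversions of their images under `g`); the
irreducible words are the standard monomials. Words are closed under multiplication and contain
the generators, so they span the algebra.

For the count, a permutation increasing on a set `s` of size `r` is determined by its values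
off `s`, so there are at most `α!/r!` of them; summing over `s` gives `#Π_α`.
-/

open Equiv
open scoped Nat

def List.inversionCount {γ : Type*} [LinearOrder γ] : List γ → ℕ
  | [] => 0
  | a :: t => t.countP (· < a) + t.inversionCount

theorem List.inversionCount_append_cons_cons {γ : Type*} [LinearOrder γ] (l₁ l₂ : List γ)
    {a b : γ} (h : b < a) :
    (l₁ ++ a :: b :: l₂).inversionCount = (l₁ ++ b :: a :: l₂).inversionCount + 1 := by
  induction l₁ with
  | nil => simp [inversionCount, h, not_lt.mpr h.le]; omega
  | cons c t ih =>
    simp only [List.cons_append, inversionCount, ih,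
      ((List.Perm.swap b a l₂).append_left t).countP_eq]
    omega

theorem List.exists_append_cons_cons_of_not_isChain {γ : Type*} {R : γ → γ → Prop}
    {l : List γ} (h : ¬ l.IsChain R) : ∃ l₁ a b l₂, l = l₁ ++ a :: b :: l₂ ∧ ¬ R a b := by
  rw [List.isChain_iff_forall_rel_of_append_cons_cons] at h
  push Not at h
  obtain ⟨a, b, l₁, l₂, hl, hab⟩ := h
  exact ⟨l₁, a, b, l₂, hl, hab⟩

theorem List.Pairwise.strictMonoOn_of_map {γ δ : Type*} [LinearOrder γ] [Preorder δ]
    {f : γ → δ} {l : List γ} (hl : l.Pairwise (· < ·)) (hf : (l.map f).Pairwise (· < ·)) :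
    StrictMonoOn f {x | x ∈ l} := by
  intro a ha b hb hab
  obtain ⟨p, hp, rfl⟩ := List.getElem_of_mem ha
  obtain ⟨q, hq, rfl⟩ := List.getElem_of_mem hb
  have hpq : p < q := by
    by_contra! h
    rcases h.lt_or_eq with h | rfl
    · exact (List.pairwise_iff_getElem.mp hl q p hq hp h).asymm hab
    · exact lt_irrefl _ hab
  have := List.pairwise_iff_getElem.mp hf p q (by simpa) (by simpa) hpq
  simpa using this

theorem Equiv.Perm.eq_of_strictMonoOn_of_eqOn_compl {ι : Type*} [LinearOrder ι]
    {s : Finset ι} {g h : Perm ι} (hg : StrictMonoOn g s) (hh : StrictMonoOn h s)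
    (hgh : Set.EqOn g h (↑s)ᶜ) : g = h := by
  have himage : g '' s = h '' s := by
    rw [← compl_inj_iff, ← Set.image_compl_eq g.bijective, ← Set.image_compl_eq h.bijective]
    exact hgh.image_eq
  have hmono : ∀ f : Perm ι, StrictMonoOn f s → StrictMono (f ∘ s.orderEmbOfFin rfl) :=
    fun f hf _ _ hpq => hf (s.orderEmbOfFin_mem rfl _) (s.orderEmbOfFin_mem rfl _)
      ((s.orderEmbOfFin rfl).strictMono hpq)
  have hcomp : g ∘ s.orderEmbOfFin rfl = h ∘ s.orderEmbOfFin rfl := by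
    rw [← (hmono g hg).range_inj (hmono h hh), Set.range_comp, Set.range_comp,
      Finset.range_orderEmbOfFin, himage]
  ext x
  by_cases hx : x ∈ s
  · rw [← Finset.mem_coe, ← Finset.range_orderEmbOfFin s rfl] at hx
    obtain ⟨k, rfl⟩ := hx
    exact congrFun hcomp k
  · exact hgh hx

theorem Equiv.Perm.card_strictMonoOn_le {ι : Type*} [Fintype ι] [LinearOrder ι]
    (s : Finset ι) :
    Nat.card {g : Perm ι // StrictMonoOn g s} ≤
      (Fintype.card ι).descFactorial (Fintype.card ι - s.card) := by
  classical
  let restrict : {g : Perm ι // StrictMonoOn g s} → ((sᶜ : Finset ι) ↪ ι) :=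
    fun g => (Function.Embedding.subtype _).trans g.1.toEmbedding
  have hinj : Function.Injective restrict := fun g h hgh => Subtype.ext <|
    eq_of_strictMonoOn_of_eqOn_compl g.2 h.2 fun x hx =>
      DFunLike.congr_fun hgh ⟨x, by simpa using hx⟩
  calc Nat.card {g : Perm ι // StrictMonoOn g s} ≤ Nat.card ((sᶜ : Finset ι) ↪ ι) :=
        Nat.card_le_card_of_injective restrict hinj
    _ = _ := by simp [Nat.card_eq_fintype_card, Fintype.card_embedding_eq]

theorem card_sigma_strictMonoOn_le {ι : Type*} [Fintype ι] [LinearOrder ι] :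
    Nat.card (Σ s : Finset ι, {g : Perm ι // StrictMonoOn g s}) ≤
      ∑ r ∈ Finset.range (Fintype.card ι + 1),
        (Fintype.card ι).choose r * (Fintype.card ι).descFactorial (Fintype.card ι - r) := by
  rw [Nat.card_sigma]
  calc ∑ s : Finset ι, Nat.card {g : Perm ι // StrictMonoOn g s}
      ≤ ∑ s : Finset ι, (Fintype.card ι).descFactorial (Fintype.card ι - s.card) :=
        Finset.sum_le_sum fun s _ => Perm.card_strictMonoOn_le s
    _ = _ := by
      rw [← Finset.powerset_univ,
        Finset.sum_powerset_apply_card fun k => (Fintype.card ι).descFactorial (Fintype.card ι - k)]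
      simp [Finset.card_univ]

theorem Nat.choose_mul_descFactorial_sub {n r : ℕ} (h : r ≤ n) :
    n.choose r * n.descFactorial (n - r) = n ! ^ 2 / ((n - r)! * r ! ^ 2) := by
  symm
  apply Nat.div_eq_of_eq_mul_left (by positivity)
  have hdesc : r ! * n.descFactorial (n - r) = n ! := by
    simpa [Nat.sub_sub_self h] using Nat.factorial_mul_descFactorial (Nat.sub_le n r)
  calc n ! ^ 2 = (n.choose r * r ! * (n - r)!) * (r ! * n.descFactorial (n - r)) := by
        rw [Nat.choose_mul_factorial_mul_factorial h, hdesc, sq]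
    _ = _ := by ring

section Words

variable {ι B : Type*} [Monoid B]

def permWord (A : Perm ι → B) (Θ : ι → B) (g : Perm ι) (l : List ι) : B :=
  A g * (l.map Θ).prod

variable {A : Perm ι → B} {Θ : ι → B}

theorem permWord_append (g : Perm ι) (l m : List ι) :
    permWord A Θ g (l ++ m) = permWord A Θ g l * (m.map Θ).prod := by
  simp [permWord, mul_assoc]

variable (hA : ∀ g h, A g * A h = A (g * h)) (hA1 : A 1 = 1)
  (hconj : ∀ g i, A g * Θ i * A g⁻¹ = Θ (g i))
include hA hA1 hconj

theorem A_mul_Θ (g : Perm ι) (i : ι) : A g * Θ i = Θ (g i) * A g := by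
  rw [← hconj, mul_assoc, mul_assoc, hA, inv_mul_cancel, hA1, mul_one]

theorem A_mul_prod_map_Θ (g : Perm ι) (l : List ι) :
    A g * (l.map Θ).prod = ((l.map g).map Θ).prod * A g := by
  induction l with
  | nil => simp
  | cons a t ih =>
    simp only [List.map_cons, List.prod_cons]
    rw [← mul_assoc, A_mul_Θ hA hA1 hconj, mul_assoc, ih, ← mul_assoc]

theorem permWord_mul_A (g h : Perm ι) (l : List ι) :
    permWord A Θ g l * A h = permWord A Θ (g * h) (l.map ⇑h⁻¹) := by
  rw [permWord, permWord, ← hA, mul_assoc, mul_assoc, A_mul_prod_map_Θ hA hA1 hconj h]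
  simp [Function.comp_def]

theorem permWord_mul_permWord (g h : Perm ι) (l m : List ι) :
    permWord A Θ g l * permWord A Θ h m = permWord A Θ (g * h) (l.map ⇑h⁻¹ ++ m) := by
  rw [permWord_append, ← permWord_mul_A hA hA1 hconj, permWord, permWord]
  simp only [mul_assoc]

end Words

section Relations

variable {ι B : Type*} [DecidableEq ι] [Ring B] {A : Perm ι → B} {Θ : ι → B}
  (hA : ∀ g h, A g * A h = A (g * h)) (hA1 : A 1 = 1)
  (hconj : ∀ g i, A g * Θ i * A g⁻¹ = Θ (g i))

include hA hA1 hconj in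
theorem A_swap_mul_Θ_mul_Θ (hrel : ∀ i j, (A (swap i j) - A 1) * Θ j * (Θ i + A 1) = 0)
    (i j : ι) : A (swap i j) * (Θ i * Θ j) = Θ i * Θ j + Θ i - A (swap i j) * Θ i := by
  set τ := swap i j
  have hτi : A τ * Θ i = Θ j * A τ := by rw [A_mul_Θ hA hA1 hconj, swap_apply_left]
  have hτj : A τ * Θ j = Θ i * A τ := by rw [A_mul_Θ hA hA1 hconj, swap_apply_right]
  have hττ : A τ * A τ = 1 := by rw [hA, swap_mul_self, hA1]
  have hrel' : Θ j * Θ i + Θ j = (Θ i * Θ j + Θ i) * A τ := by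
    have h := hrel i j
    rw [hA1, sub_mul, sub_mul, one_mul, sub_eq_zero, hτj, mul_assoc, mul_add, hτi,
      mul_one] at h
    calc Θ j * Θ i + Θ j = Θ j * (Θ i + 1) := by noncomm_ring
      _ = Θ i * (Θ j * A τ + A τ) := h.symm
      _ = _ := by noncomm_ring
  calc A τ * (Θ i * Θ j) = (Θ j * Θ i + Θ j) * A τ - A τ * Θ i := by
        rw [← mul_assoc, hτi, mul_assoc, hτj]; noncomm_ring
    _ = Θ i * Θ j + Θ i - A τ * Θ i := by rw [hrel', mul_assoc, hττ, mul_one]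

end Relations

section Reductions

variable {R ι B : Type*} [CommRing R] [Ring B] [Algebra R B]
  {A : Perm ι → B} {Θ : ι → B}

theorem permWord_append_cons_cons_self {ν : R} (hA1 : A 1 = 1)
    (hsq : ∀ j, Θ j * Θ j = (ν - 1) • Θ j + ν • A 1) (g : Perm ι) (l₁ l₂ : List ι) (b : ι) :
    permWord A Θ g (l₁ ++ b :: b :: l₂) =
      (ν - 1) • permWord A Θ g (l₁ ++ b :: l₂) + ν • permWord A Θ g (l₁ ++ l₂) := by
  simp only [permWord_append, List.map_cons, List.prod_cons, ← mul_assoc (Θ b), hsq, hA1,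
    add_mul, mul_add, smul_mul_assoc, mul_smul_comm, one_mul]

variable [DecidableEq ι] (hA : ∀ g h, A g * A h = A (g * h)) (hA1 : A 1 = 1)
  (hconj : ∀ g i, A g * Θ i * A g⁻¹ = Θ (g i))
include hA hA1 hconj

theorem permWord_append_cons_cons_comm
    (hcomm : ∀ i j, Θ j * Θ i - Θ i * Θ j = A (swap i j) * (Θ j - Θ i))
    (g : Perm ι) (l₁ l₂ : List ι) (a b : ι) :
    permWord A Θ g (l₁ ++ a :: b :: l₂) = permWord A Θ g (l₁ ++ b :: a :: l₂) +
      (permWord A Θ (g * swap b a) (l₁.map (swap b a) ++ a :: l₂) -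
        permWord A Θ (g * swap b a) (l₁.map (swap b a) ++ b :: l₂)) := by
  have hab : Θ a * Θ b = Θ b * Θ a + A (swap b a) * (Θ a - Θ b) := by
    rw [← hcomm]; abel
  have hw := permWord_mul_A hA hA1 hconj g (swap b a) l₁
  rw [swap_inv] at hw
  simp only [permWord_append, List.map_cons, List.prod_cons, ← hw, ← mul_assoc (Θ a), hab]
  noncomm_ring

theorem permWord_append_cons_cons_mul_swap
    (hrel : ∀ i j, (A (swap i j) - A 1) * Θ j * (Θ i + A 1) = 0)
    (g : Perm ι) (l₁ l₂ : List ι) {i j : ι} (hi : i ∉ l₁) (hj : j ∉ l₁) :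
    permWord A Θ g (l₁ ++ i :: j :: l₂) = permWord A Θ (g * swap i j) (l₁ ++ i :: j :: l₂) +
      (permWord A Θ (g * swap i j) (l₁ ++ i :: l₂) - permWord A Θ g (l₁ ++ i :: l₂)) := by
  have hw : permWord A Θ g l₁ = permWord A Θ (g * swap i j) l₁ * A (swap i j) := by
    have hfix : l₁.map ⇑(swap i j)⁻¹ = l₁ := by
      rw [swap_inv]
      refine (List.map_congr_left fun x hx => ?_).trans (List.map_id l₁)
      exact swap_apply_of_ne_of_ne (ne_of_mem_of_not_mem hx hi) (ne_of_mem_of_not_mem hx hj)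
    rw [permWord_mul_A hA hA1 hconj, mul_assoc, swap_mul_self, mul_one, hfix]
  simp only [permWord_append, List.map_cons, List.prod_cons, hw, ← mul_assoc (Θ i)]
  rw [mul_assoc _ (A _), ← mul_assoc (A _), A_swap_mul_Θ_mul_Θ hA hA1 hconj hrel]
  noncomm_ring

end Reductions

section Straightening

open Submodule

variable {R ι B : Type*} [CommRing R] [LinearOrder ι] [Ring B] [Algebra R B] {ν : R}
  {A : Perm ι → B} {Θ : ι → B}

def standardMonomial (A : Perm ι → B) (Θ : ι → B)
    (p : Σ s : Finset ι, {g : Perm ι // StrictMonoOn g s}) : B :=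
  permWord A Θ p.2 (p.1.sort (· ≤ ·))

theorem range_standardMonomial : Set.range (standardMonomial A Θ) =
    {x | ∃ (g : Perm ι) (s : Finset ι), StrictMonoOn g s ∧
      x = A g * ((s.sort (· ≤ ·)).map Θ).prod} := by
  ext x
  constructor
  · rintro ⟨⟨s, g, hg⟩, rfl⟩
    exact ⟨g, s, hg, rfl⟩
  · rintro ⟨g, s, hg, rfl⟩
    exact ⟨⟨s, g, hg⟩, rfl⟩

theorem permWord_mem_span_of_pairwise {g : Perm ι} {l : List ι} (hl : l.Pairwise (· < ·))
    (hg : (l.map g).Pairwise (· < ·)) :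
    permWord A Θ g l ∈ span R (Set.range (standardMonomial A Θ)) := by
  refine subset_span ⟨⟨l.toFinset, g, by simpa using hl.strictMonoOn_of_map hg⟩, ?_⟩
  rw [standardMonomial, (List.toFinset_sort _ hl.nodup).mpr (hl.imp le_of_lt)]

variable (hA : ∀ g h, A g * A h = A (g * h)) (hA1 : A 1 = 1)
  (hconj : ∀ g i, A g * Θ i * A g⁻¹ = Θ (g i))
  (hsq : ∀ j, Θ j * Θ j = (ν - 1) • Θ j + ν • A 1)
  (hcomm : ∀ i j, Θ j * Θ i - Θ i * Θ j = A (swap i j) * (Θ j - Θ i))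
  (hrel : ∀ i j, (A (swap i j) - A 1) * Θ j * (Θ i + A 1) = 0)

include hA hA1 hconj hrel in
theorem permWord_mem_span_of_pairwise_of_shorter {l : List ι} (hl : l.Pairwise (· < ·))
    (hshort : ∀ g (m : List ι), m.length < l.length →
      permWord A Θ g m ∈ span R (Set.range (standardMonomial A Θ)))
    (g : Perm ι) : permWord A Θ g l ∈ span R (Set.range (standardMonomial A Θ)) := by
  induction hn : (l.map g).inversionCount using Nat.strong_induction_on generalizing g with
  | _ n ih =>
  by_cases hg : (l.map g).Pairwise (· < ·)
  · exact permWord_mem_span_of_pairwise hl hg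
  rw [← List.isChain_iff_pairwise, List.isChain_map] at hg
  obtain ⟨l₁, i, j, l₂, rfl, hgij⟩ := List.exists_append_cons_cons_of_not_isChain hg
  simp only [List.pairwise_append, List.pairwise_cons, List.mem_cons] at hl
  obtain ⟨-, ⟨hi₂, hj₂, -⟩, h₁⟩ := hl
  have hi : i ∉ l₁ := fun h => lt_irrefl i (h₁ i h i (by simp))
  have hj : j ∉ l₁ := fun h => lt_irrefl j (h₁ j h j (by simp))
  have hfix₁ : l₁.map ⇑(g * swap i j) = l₁.map g := List.map_congr_left fun x hx => by
    simp [swap_apply_of_ne_of_ne (h₁ x hx i (by simp)).ne (h₁ x hx j (by simp)).ne]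
  have hfix₂ : l₂.map ⇑(g * swap i j) = l₂.map g := List.map_congr_left fun x hx => by
    simp [swap_apply_of_ne_of_ne (hi₂ x (by simp [hx])).ne' (hj₂ x hx).ne']
  have hgji : g j < g i :=
    (not_lt.mp hgij).lt_of_ne (g.injective.ne (hi₂ j (Or.inl rfl)).ne')
  have hmap : (l₁ ++ i :: j :: l₂).map ⇑(g * swap i j) = l₁.map g ++ g j :: g i :: l₂.map g := by
    rw [List.map_append, List.map_cons, List.map_cons, hfix₁, hfix₂]
    simp
  have hinv := List.inversionCount_append_cons_cons (l₁.map g) (l₂.map g) hgji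
  rw [permWord_append_cons_cons_mul_swap hA hA1 hconj hrel g l₁ l₂ hi hj]
  refine add_mem (ih _ ?_ _ rfl) (sub_mem (hshort _ _ ?_) (hshort _ _ ?_))
  · rw [hmap, ← hn, List.map_append, List.map_cons, List.map_cons, hinv]
    omega
  all_goals simp

include hA hA1 hconj hsq hcomm hrel in
theorem permWord_mem_span_of_shorter {l : List ι}
    (hshort : ∀ g (m : List ι), m.length < l.length →
      permWord A Θ g m ∈ span R (Set.range (standardMonomial A Θ)))
    (g : Perm ι) : permWord A Θ g l ∈ span R (Set.range (standardMonomial A Θ)) := by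
  induction hn : l.inversionCount using Nat.strong_induction_on generalizing l g with
  | _ n ih =>
  by_cases hl : l.Pairwise (· < ·)
  · exact permWord_mem_span_of_pairwise_of_shorter hA hA1 hconj hrel hl hshort g
  rw [← List.isChain_iff_pairwise] at hl
  obtain ⟨l₁, a, b, l₂, rfl, hab⟩ := List.exists_append_cons_cons_of_not_isChain hl
  simp only [List.length_append, List.length_cons] at hshort
  rcases (not_lt.mp hab).lt_or_eq with hba | rfl
  · rw [permWord_append_cons_cons_comm hA hA1 hconj hcomm]
    have hinv := List.inversionCount_append_cons_cons l₁ l₂ hba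
    refine add_mem (ih _ (by omega) (fun g m hm => hshort g m ?_) g rfl)
      (sub_mem (hshort _ _ ?_) (hshort _ _ ?_))
    all_goals simp_all
  · rw [permWord_append_cons_cons_self hA1 hsq]
    exact add_mem (smul_mem _ _ (hshort _ _ (by simp))) (smul_mem _ _ (hshort _ _ (by simp)))

include hA hA1 hconj hsq hcomm hrel in
theorem permWord_mem_span (g : Perm ι) (l : List ι) :
    permWord A Θ g l ∈ span R (Set.range (standardMonomial A Θ)) := by
  induction hn : l.length using Nat.strong_induction_on generalizing g l with
  | _ n ih =>
  exact permWord_mem_span_of_shorter hA hA1 hconj hsq hcomm hrel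
    (fun g m hm => ih _ (hn ▸ hm) g m rfl) g

end Straightening

theorem span_standardMonomial_eq_top {R ι B : Type*} [CommRing R] [LinearOrder ι] [Ring B]
    [Algebra R B] {ν : R} {A : Perm ι → B} {Θ : ι → B}
    (hgen : Algebra.adjoin R (Set.range A ∪ Set.range Θ) = ⊤)
    (hA : ∀ g h, A g * A h = A (g * h)) (hA1 : A 1 = 1)
    (hconj : ∀ g i, A g * Θ i * A g⁻¹ = Θ (g i))
    (hsq : ∀ j, Θ j * Θ j = (ν - 1) • Θ j + ν • A 1)
    (hcomm : ∀ i j, Θ j * Θ i - Θ i * Θ j = A (swap i j) * (Θ j - Θ i))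
    (hrel : ∀ i j, (A (swap i j) - A 1) * Θ j * (Θ i + A 1) = 0) :
    Submodule.span R (Set.range (standardMonomial A Θ)) = ⊤ := by
  let words : Submonoid B :=
    { carrier := Set.range fun p : Perm ι × List ι => permWord A Θ p.1 p.2
      one_mem' := ⟨(1, []), by simp [permWord, hA1]⟩
      mul_mem' := by
        rintro _ _ ⟨⟨g, l⟩, rfl⟩ ⟨⟨h, m⟩, rfl⟩
        exact ⟨(g * h, l.map ⇑h⁻¹ ++ m), (permWord_mul_permWord hA hA1 hconj g h l m).symm⟩ }
  have hgen_le : Set.range A ∪ Set.range Θ ⊆ words := by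
    rintro _ (⟨g, rfl⟩ | ⟨i, rfl⟩)
    · exact ⟨(g, []), by simp [permWord]⟩
    · exact ⟨(1, [i]), by simp [permWord, hA1]⟩
  rw [eq_top_iff, ← Algebra.top_toSubmodule, ← hgen, Algebra.adjoin_eq_span, Submodule.span_le]
  intro x hx
  obtain ⟨⟨g, l⟩, rfl⟩ := Submonoid.closure_le.mpr hgen_le hx
  exact permWord_mem_span hA hA1 hconj hsq hcomm hrel g l

/-- In any `ℂ`-algebra generated by elements `A(g)` (`g ∈ S_α`) and
`Θ_1, …, Θ_α` satisfying the defining relations of `O[α;ν]`, the monomials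
`A(g)·Θ_{i₁}⋯Θ_{i_k}` with `i₁ < ⋯ < i_k` and `g(i₁) < ⋯ < g(i_k)` span;
hence `dim O[α;ν] ≤ #Π_α = Σ_{r=0}^α (α!)²/((α−r)!(r!)²)`. -/
theorem span_monomials_and_dim_le (α : ℕ) (ν : ℂ) {B : Type} [Ring B] [Algebra ℂ B]
    (A : Perm (Fin α) → B) (Θ : Fin α → B)
    (hgen : Algebra.adjoin ℂ (Set.range A ∪ Set.range Θ) = ⊤)
    (hA : ∀ g₁ g₂, A g₁ * A g₂ = A (g₁ * g₂))
    (hA1 : A 1 = 1)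
    (hconj : ∀ (g : Perm (Fin α)) (i : Fin α), A g * Θ i * A g⁻¹ = Θ (g i))
    (hsq : ∀ j, Θ j * Θ j = (ν - 1) • Θ j + ν • A 1)
    (hcomm : ∀ i j, Θ j * Θ i - Θ i * Θ j = A (Equiv.swap i j) * (Θ j - Θ i))
    (hrel : ∀ i j, (A (Equiv.swap i j) - A 1) * Θ j * (Θ i + A 1) = 0) :
    Submodule.span ℂ {x : B | ∃ (g : Perm (Fin α)) (s : Finset (Fin α)),
        (∀ i ∈ s, ∀ j ∈ s, i < j → g i < g j) ∧
        x = A g * ((s.sort (· ≤ ·)).map Θ).prod} = ⊤ ∧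
      Module.finrank ℂ B ≤
        ∑ r ∈ Finset.range (α + 1),
          (Nat.factorial α) ^ 2 / (Nat.factorial (α - r) * (Nat.factorial r) ^ 2) := by
  have hspan := span_standardMonomial_eq_top hgen hA hA1 hconj hsq hcomm hrel
  refine ⟨range_standardMonomial (A := A) (Θ := Θ) ▸ hspan, ?_⟩
  classical
  calc Module.finrank ℂ B = (Set.range (standardMonomial A Θ)).finrank ℂ := by
        rw [Set.finrank, hspan, finrank_top]
    _ ≤ Nat.card (Σ s : Finset (Fin α), {g : Perm (Fin α) // StrictMonoOn g s}) := by
        rw [Nat.card_eq_fintype_card]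
        exact finrank_range_le_card _
    _ ≤ ∑ r ∈ Finset.range (α + 1), α.choose r * α.descFactorial (α - r) := by
        simpa using card_sigma_strictMonoOn_le (ι := Fin α)
    _ = _ := Finset.sum_congr rfl fun r hr =>
        Nat.choose_mul_descFactorial_sub (Nat.lt_succ_iff.mp (Finset.mem_range.mp hr))
end

section
/- In the monoid algebra C[Π_α], setting Θ'_j := T_j (the partial identity undefined at j) and A(g) := g for g ∈ S_α, the relations (Θ'_j)² = Θ'_j, Θ'_jΘ'_i = Θ'_iΘ'_j, and (i j)·Θ'_jΘ'_i = Θ'_jΘ'_i hold, and every element of Π_α can be written uniquely as g·T_{i_1}⋯T_{i_k} with i_1<⋯<i_k and g(i_1)<⋯<g(i_k). -/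
/-!
The element `g · T_{i₁} ⋯ T_{i_k}` is `g` restricted to the complement of `{i₁, …, i_k}`, so it
equals `x` exactly when `{i₁, …, i_k}` is the set where `x` is undefined and `g` extends `x`
(`x ≤ g.toPEquiv`). Any such `g` maps that set bijectively onto the complement of the range of
`x`, and there the condition `g(i₁) < ⋯ < g(i_k)` pins it down: between two finite linear orders
of the same size there is exactly one increasing bijection.
-/

open Equiv

/-- The symmetric inverse monoid `Π_α` of partial injections of `Fin α`,
with multiplication given by composition of partial maps
(`(f * g)(x) = f(g(x))`). -/
instance pequivMonoid (α : ℕ) : Monoid (PEquiv (Fin α) (Fin α)) where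
  mul f g := g.trans f
  one := PEquiv.refl _
  mul_assoc a b c := (PEquiv.trans_assoc c b a).symm
  one_mul a := PEquiv.trans_refl a
  mul_one a := PEquiv.refl_trans a

/-- `T_j ∈ Π_α`: the identity restricted to the complement of `{j}`. -/
def T {α : ℕ} (j : Fin α) : PEquiv (Fin α) (Fin α) where
  toFun i := if i = j then none else some i
  invFun i := if i = j then none else some i
  inv a b := by
    try simp only [Option.mem_def]
    split_ifs <;> simp_all [eq_comm]

theorem StrictMonoOn.eqOn_of_image_eq {α β : Type*} [LinearOrder α] [WellFoundedLT α] [Preorder β]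
    {s : Set α} {f g : α → β} (hf : StrictMonoOn f s) (hg : StrictMonoOn g s)
    (h : f '' s = g '' s) : s.EqOn f g := fun a ha =>
  congrFun ((hf.domRestrict.range_inj hg.domRestrict).1 (by simpa only [Set.range_domRestrict]))
    ⟨a, ha⟩

namespace PEquiv

variable {α β : Type*}

def isSomeEquiv (x : α ≃. β) : {a | (x a).isSome} ≃ {b | (x.symm b).isSome} where
  toFun a := ⟨(x a).get a.2, x.isSome_symm_get a.2⟩
  invFun b := ⟨(x.symm b).get b.2, by simpa using x.symm.isSome_symm_get b.2⟩
  left_inv a := Subtype.ext <| Option.get_of_eq_some _ <| x.eq_some_iff.2 (Option.some_get _).symm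
  right_inv b := Subtype.ext <| Option.get_of_eq_some _ <| x.eq_some_iff.1 (Option.some_get _).symm

theorem apply_eq_some_isSomeEquiv (x : α ≃. β) (a : {a | (x a).isSome}) :
    x a = some (x.isSomeEquiv a : β) :=
  (Option.some_get _).symm

/-- Extend `x` to a permutation by the increasing bijection from the complement of its domain
onto the complement of its range. -/
theorem exists_perm_le_strictMonoOn [Fintype α] [LinearOrder α] (x : α ≃. α) :
    ∃ g : Perm α, x ≤ g.toPEquiv ∧ StrictMonoOn g {a | x a = none} := by
  set D := {a | (x a).isSome}
  set R := {b | (x.symm b).isSome}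
  have hcard : Fintype.card ↥Dᶜ = Fintype.card ↥Rᶜ := by
    rw [Fintype.card_compl_set, Fintype.card_compl_set, Fintype.card_congr x.isSomeEquiv]
  let e : ↥Dᶜ ≃o ↥Rᶜ :=
    (Fintype.orderIsoFinOfCardEq _ hcard).symm.trans (Fintype.orderIsoFinOfCardEq _ rfl)
  refine ⟨(Set.sumCompl D).symm.trans ((sumCongr x.isSomeEquiv e.toEquiv).trans (Set.sumCompl R)),
    ?_, ?_⟩
  · refine PEquiv.le_def.2 fun a b hb => ?_
    have ha : a ∈ D := Option.isSome_iff_exists.2 ⟨b, hb⟩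
    rw [x.apply_eq_some_isSomeEquiv ⟨a, ha⟩] at hb
    simp [Set.sumCompl_symm_apply_of_mem ha, Option.mem_def.1 hb]
  · intro a ha b hb hab
    have ha' : a ∈ Dᶜ := by simpa [D] using ha
    have hb' : b ∈ Dᶜ := by simpa [D] using hb
    simpa [Set.sumCompl_symm_apply_of_notMem ha', Set.sumCompl_symm_apply_of_notMem hb']
      using e.strictMono (show (⟨a, ha'⟩ : ↥Dᶜ) < ⟨b, hb'⟩ from hab)

theorem perm_eq_of_le_of_strictMonoOn [LinearOrder α] [WellFoundedLT α] {x : α ≃. α}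
    {g g' : Perm α} (hg : x ≤ g.toPEquiv) (hg' : x ≤ g'.toPEquiv)
    (hm : StrictMonoOn g {a | x a = none}) (hm' : StrictMonoOn g' {a | x a = none}) : g = g' := by
  have hdom : {a | x a = none}ᶜ.EqOn g g' := fun a ha => by
    obtain ⟨b, hb⟩ := Option.ne_none_iff_exists'.1 ha
    have hb : b ∈ x a := hb
    simpa [toPEquiv_apply] using (le_def.1 hg a b hb).trans (le_def.1 hg' a b hb).symm
  have himage : g '' {a | x a = none} = g' '' {a | x a = none} := by
    rw [← compl_inj_iff, ← g.image_compl, ← g'.image_compl, hdom.image_eq]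
  ext a
  by_cases ha : x a = none
  · exact hm.eqOn_of_image_eq hm' himage ha
  · exact hdom ha

end PEquiv

section SymmetricInverseMonoid

variable {n : ℕ}

theorem pequiv_mul_apply (f g : PEquiv (Fin n) (Fin n)) (a : Fin n) :
    (f * g) a = (g a).bind f :=
  rfl

theorem T_apply (j a : Fin n) : T j a = if a = j then none else some a :=
  rfl

theorem T_mul_T_apply (i j a : Fin n) :
    (T j * T i) a = if a = i ∨ a = j then none else some a := by
  by_cases hi : a = i
  · simp [pequiv_mul_apply, T_apply, hi]
  · by_cases hj : a = j <;> simp [pequiv_mul_apply, T_apply, hi, hj]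

theorem T_mul_self (j : Fin n) : T j * T j = T j :=
  PEquiv.ext fun a => by simp [T_mul_T_apply, T_apply]

theorem T_mul_comm (i j : Fin n) : T i * T j = T j * T i :=
  PEquiv.ext fun a => by simp [T_mul_T_apply, or_comm]

theorem swap_toPEquiv_mul_T_mul_T (i j : Fin n) :
    (swap i j).toPEquiv * (T j * T i) = T j * T i :=
  PEquiv.ext fun a => by
    rw [pequiv_mul_apply, T_mul_T_apply]
    by_cases h : a = i ∨ a = j
    · simp [h]
    · simp [h, toPEquiv_apply, swap_apply_of_ne_of_ne (not_or.1 h).1 (not_or.1 h).2]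

theorem prod_map_T_apply (l : List (Fin n)) (a : Fin n) :
    (l.map T).prod a = if a ∈ l then none else some a := by
  induction l with
  | nil => rfl
  | cons b l ih => by_cases h : a ∈ l <;> simp [pequiv_mul_apply, ih, T_apply, h]

theorem toPEquiv_mul_prod_T_apply (g : Perm (Fin n)) (s : Finset (Fin n)) (a : Fin n) :
    (g.toPEquiv * ((s.sort (· ≤ ·)).map T).prod) a = if a ∈ s then none else some (g a) := by
  by_cases h : a ∈ s <;> simp [pequiv_mul_apply, prod_map_T_apply, toPEquiv_apply, h]

theorem eq_toPEquiv_mul_prod_T_iff (x : PEquiv (Fin n) (Fin n)) (g : Perm (Fin n))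
    (s : Finset (Fin n)) :
    x = g.toPEquiv * ((s.sort (· ≤ ·)).map T).prod ↔
      (s : Set (Fin n)) = {a | x a = none} ∧ x ≤ g.toPEquiv := by
  constructor
  · rintro rfl
    refine ⟨Set.ext fun a => ?_, PEquiv.le_def.2 fun a b => ?_⟩ <;>
      by_cases h : a ∈ s <;> simp [toPEquiv_mul_prod_T_apply, toPEquiv_apply, h]
  · rintro ⟨hs, hxg⟩
    ext a b
    rw [toPEquiv_mul_prod_T_apply]
    by_cases h : a ∈ s
    · simp [h, show x a = none from (Set.ext_iff.1 hs a).1 h]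
    · obtain ⟨c, hc⟩ := Option.ne_none_iff_exists'.1 fun hx => h ((Set.ext_iff.1 hs a).2 hx)
      have hgc : g a = c := by simpa [toPEquiv_apply] using PEquiv.le_def.1 hxg a c hc
      simp [h, hc, hgc]

end SymmetricInverseMonoid

/-- In the monoid algebra `C[Π_α]`, setting `Θ'_j := T_j` and `A(g) := g` for
`g ∈ S_α`, the relations `(Θ'_j)² = Θ'_j`, `Θ'_jΘ'_i = Θ'_iΘ'_j` and
`(i j)·Θ'_jΘ'_i = Θ'_jΘ'_i` hold, and every element of `Π_α` can be written
uniquely as `g·T_{i₁}⋯T_{i_k}` with `i₁ < ⋯ < i_k` and `g(i₁) < ⋯ < g(i_k)`. -/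
theorem pequiv_relations_and_unique_factorization (α : ℕ) :
    (∀ j : Fin α, T j * T j = T j) ∧
    (∀ i j : Fin α, T j * T i = T i * T j) ∧
    (∀ i j : Fin α, (Equiv.swap i j).toPEquiv * (T j * T i) = T j * T i) ∧
    (∀ x : PEquiv (Fin α) (Fin α),
      ∃! p : Perm (Fin α) × Finset (Fin α),
        (∀ i ∈ p.2, ∀ j ∈ p.2, i < j → p.1 i < p.1 j) ∧
        x = p.1.toPEquiv * ((p.2.sort (· ≤ ·)).map T).prod) := by
  refine ⟨T_mul_self, fun i j => T_mul_comm j i, swap_toPEquiv_mul_T_mul_T, fun x => ?_⟩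
  obtain ⟨g, hxg, hg⟩ := x.exists_perm_le_strictMonoOn
  refine ⟨(g, {a | x a = none}.toFinset), ⟨?_, ?_⟩, ?_⟩
  · simpa [StrictMonoOn] using hg
  · exact (eq_toPEquiv_mul_prod_T_iff x g _).2 ⟨Set.coe_toFinset _, hxg⟩
  · rintro ⟨g', s'⟩ ⟨hg', hx⟩
    obtain ⟨hs', hxg'⟩ := (eq_toPEquiv_mul_prod_T_iff x g' s').1 hx
    have hs : s' = {a | x a = none}.toFinset := by rw [← Finset.coe_inj, hs', Set.coe_toFinset]
    rw [PEquiv.perm_eq_of_le_of_strictMonoOn hxg' hxg (hs' ▸ hg') hg, hs]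
end
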